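/- arXiv:1003.3143 — 4 statements merged into one kernel-verified Lean document; each statement's English description precedes it below -/
import Mathlib

section
/- Let W → W' be a local homomorphism of complete local commutative Noetherian rings with residue fields k and k' respectively, inducing a field embedding k → k', and let R be a complete local commutative Noetherian W-algebra with residue field k and maximal ideal m_R. Let Ω = W' ⊗_W R and let m_Ω be the ideal of Ω generated by the images of m_{W'} and m_R. Then Ω/m_Ω is isomorphic to k', and the natural k'-linear map k' ⊗_k (m_R/(m_R² + m_W R)) → m_Ω/(m_Ω² + m_{W'} Ω) is an isomorphism of k'-vector spaces. -/
open IsLocalRing TensorProduct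

/-- The ideal of `Ω = W' ⊗_W R` generated by the images of the maximal ideals of `W'` and `R`. -/
noncomputable def tensorMaxIdeal (W W' R : Type) [CommRing W] [CommRing W'] [CommRing R]
    [IsLocalRing W'] [IsLocalRing R] [Algebra W W'] [Algebra W R] :
    Ideal (TensorProduct W W' R) :=
  (maximalIdeal W').map
      (Algebra.TensorProduct.includeLeftRingHom : W' →+* TensorProduct W W' R) ⊔
    (maximalIdeal R).map
      ((Algebra.TensorProduct.includeRight : R →ₐ[W] TensorProduct W W' R) : R →+* _)

/-- The quotient `m/(m² + m_W·B)` for an ideal `m` of a `W`-algebra `B`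
(with structure map `ι`). -/
noncomputable def relCot (W : Type) {B : Type} [CommRing W] [IsLocalRing W] [CommRing B]
    (ι : W →+* B) (m : Ideal B) : Type :=
  ↥m ⧸ (Submodule.comap (Submodule.subtype m)
    ((m ^ 2 ⊔ (maximalIdeal W).map ι : Ideal B) : Submodule B B))

noncomputable instance (W : Type) {B : Type} [CommRing W] [IsLocalRing W] [CommRing B]
    (ι : W →+* B) (m : Ideal B) : AddCommGroup (relCot W ι m) := by
  delta relCot; infer_instance

noncomputable instance (W : Type) {B : Type} [CommRing W] [IsLocalRing W] [CommRing B]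
    (ι : W →+* B) (m : Ideal B) : Module B (relCot W ι m) := by
  delta relCot; infer_instance

/-- The class of `x ∈ m` in `m/(m² + m_W·B)`. -/
noncomputable def relCotMk (W : Type) {B : Type} [CommRing W] [IsLocalRing W] [CommRing B]
    (ι : W →+* B) (m : Ideal B) (x : ↥m) : relCot W ι m :=
  Submodule.Quotient.mk x

section aux
variable (W W' R : Type) [CommRing W] [IsLocalRing W]
  [CommRing W'] [IsLocalRing W'] [Algebra W W']
  [CommRing R] [IsLocalRing R] [Algebra W R] [IsLocalHom (algebraMap W R)]

lemma approx_res (hres : Function.Surjective (ResidueField.map (algebraMap W R)))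
    (r : R) : ∃ w : W, r - algebraMap W R w ∈ maximalIdeal R := by
  obtain ⟨c, hc⟩ := hres (residue R r)
  obtain ⟨w, rfl⟩ := Ideal.Quotient.mk_surjective c
  refine ⟨w, ?_⟩
  have : residue R (algebraMap W R w) = residue R r := by
    rw [← hc]; rfl
  have := (Ideal.Quotient.eq (I := maximalIdeal R)).mp this.symm
  exact this

lemma approx_tensor (hres : Function.Surjective (ResidueField.map (algebraMap W R)))
    (z : TensorProduct W W' R) :
    ∃ w' : W', z - w' ⊗ₜ[W] 1 ∈ tensorMaxIdeal W W' R := by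
  induction z with
  | zero => exact ⟨0, by simp⟩
  | tmul w' r =>
      obtain ⟨w, hw⟩ := approx_res W R hres r
      refine ⟨algebraMap W W' w * w', ?_⟩
      have h1 : (algebraMap W W' w * w') ⊗ₜ[W] (1 : R) = w' ⊗ₜ[W] (algebraMap W R w) := by
        rw [Algebra.algebraMap_eq_smul_one (A := W'), smul_mul_assoc, one_mul,
          smul_tmul, Algebra.algebraMap_eq_smul_one (A := R)]
      rw [h1, ← TensorProduct.tmul_sub]
      have : (w' ⊗ₜ[W] (r - algebraMap W R w) : TensorProduct W W' R)
          = (Algebra.TensorProduct.includeLeftRingHom w') *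
            (Algebra.TensorProduct.includeRight (R := W) (r - algebraMap W R w)) := by
        simp [Algebra.TensorProduct.includeLeftRingHom_apply,
          Algebra.TensorProduct.tmul_mul_tmul]
      rw [this]
      exact Ideal.mem_sup_right (Ideal.mul_mem_left _ _ (Ideal.mem_map_of_mem _ hw))
  | add x y hx hy =>
      obtain ⟨a, ha⟩ := hx
      obtain ⟨b, hb⟩ := hy
      refine ⟨a + b, ?_⟩
      have : x + y - (a + b) ⊗ₜ[W] (1:R) = (x - a ⊗ₜ[W] 1) + (y - b ⊗ₜ[W] 1) := by
        rw [TensorProduct.add_tmul]; ring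
      rw [this]
      exact Ideal.add_mem _ ha hb

end aux

section part1
variable (W W' R : Type) [CommRing W] [IsLocalRing W]
  [CommRing W'] [IsLocalRing W'] [Algebra W W'] [IsLocalHom (algebraMap W W')]
  [CommRing R] [IsLocalRing R] [Algebra W R] [IsLocalHom (algebraMap W R)]

noncomputable def psiRF (hres : Function.Bijective (ResidueField.map (algebraMap W R))) :
    ResidueField R →+* ResidueField W' :=
  (ResidueField.map (algebraMap W W')).comp
    (RingEquiv.ofBijective _ hres).symm.toRingHom

lemma psiRF_residue_algebraMap (hres : Function.Bijective (ResidueField.map (algebraMap W R)))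
    (w : W) : psiRF W W' R hres (residue R (algebraMap W R w))
      = residue W' (algebraMap W W' w) := by
  have h1 : residue R (algebraMap W R w)
      = (RingEquiv.ofBijective _ hres) (residue W w) := by
    show _ = ResidueField.map (algebraMap W R) (residue W w)
    rw [ResidueField.map_residue]
  rw [psiRF, RingHom.comp_apply, RingEquiv.toRingHom_eq_coe, RingHom.coe_coe, h1,
    RingEquiv.symm_apply_apply]
  exact ResidueField.map_residue _ _

noncomputable def omegaToK' (hres : Function.Bijective (ResidueField.map (algebraMap W R))) :
    TensorProduct W W' R →+* ResidueField W' :=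
  letI : Algebra W (ResidueField W') := ((residue W').comp (algebraMap W W')).toAlgebra
  letI a1 : W' →ₐ[W] ResidueField W' := { toRingHom := residue W', commutes' := fun w => rfl }
  letI a2 : R →ₐ[W] ResidueField W' :=
    { toRingHom := (psiRF W W' R hres).comp (residue R),
      commutes' := fun w => psiRF_residue_algebraMap W W' R hres w }
  (Algebra.TensorProduct.productMap a1 a2).toRingHom

lemma omegaToK'_tmul (hres : Function.Bijective (ResidueField.map (algebraMap W R)))
    (w' : W') (r : R) :
    omegaToK' W W' R hres (w' ⊗ₜ r) = residue W' w' * psiRF W W' R hres (residue R r) := rfl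
end part1

section part1b
variable (W W' R : Type) [CommRing W] [IsLocalRing W]
  [CommRing W'] [IsLocalRing W'] [Algebra W W'] [IsLocalHom (algebraMap W W')]
  [CommRing R] [IsLocalRing R] [Algebra W R] [IsLocalHom (algebraMap W R)]

lemma tensorMaxIdeal_le_ker (hres : Function.Bijective (ResidueField.map (algebraMap W R))) :
    tensorMaxIdeal W W' R ≤ RingHom.ker (omegaToK' W W' R hres) := by
  refine sup_le ?_ ?_ <;> rw [Ideal.map_le_iff_le_comap] <;> intro x hx <;>
    simp only [Ideal.mem_comap, RingHom.mem_ker]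
  · show omegaToK' W W' R hres (x ⊗ₜ 1) = 0
    have h : residue W' x = 0 := Ideal.Quotient.eq_zero_iff_mem.mpr hx
    rw [omegaToK'_tmul, h, zero_mul]
  · show omegaToK' W W' R hres (1 ⊗ₜ x) = 0
    have h : residue R x = 0 := Ideal.Quotient.eq_zero_iff_mem.mpr hx
    rw [omegaToK'_tmul, h, map_zero, mul_zero]

lemma ker_omegaToK' (hres : Function.Bijective (ResidueField.map (algebraMap W R))) :
    RingHom.ker (omegaToK' W W' R hres) = tensorMaxIdeal W W' R := by
  refine le_antisymm ?_ (tensorMaxIdeal_le_ker W W' R hres)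
  intro z hz
  obtain ⟨w', hw'⟩ := approx_tensor W W' R hres.surjective z
  have h0 : omegaToK' W W' R hres (w' ⊗ₜ 1) = 0 := by
    have := tensorMaxIdeal_le_ker W W' R hres hw'
    rw [RingHom.mem_ker, map_sub] at this
    rw [RingHom.mem_ker] at hz
    rw [hz, zero_sub, neg_eq_zero] at this
    exact this
  rw [omegaToK'_tmul, map_one, map_one, mul_one] at h0
  have hw'm : w' ∈ maximalIdeal W' := Ideal.Quotient.eq_zero_iff_mem.mp h0
  have : z = (z - w' ⊗ₜ 1) + w' ⊗ₜ 1 := by ring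
  rw [this]
  exact Ideal.add_mem _ hw' (Ideal.mem_sup_left (Ideal.mem_map_of_mem _ hw'm))

lemma omegaToK'_surjective (hres : Function.Bijective (ResidueField.map (algebraMap W R))) :
    Function.Surjective (omegaToK' W W' R hres) := by
  intro c
  obtain ⟨w', rfl⟩ := Ideal.Quotient.mk_surjective c
  exact ⟨w' ⊗ₜ 1, by rw [omegaToK'_tmul, map_one, map_one, mul_one]; rfl⟩

lemma part1 (hres : Function.Bijective (ResidueField.map (algebraMap W R))) :
    Nonempty ((TensorProduct W W' R ⧸ tensorMaxIdeal W W' R) ≃+* ResidueField W') :=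
  ⟨(Ideal.quotEquivOfEq (ker_omegaToK' W W' R hres).symm).trans
    (RingHom.quotientKerEquivOfSurjective (omegaToK'_surjective W W' R hres))⟩
end part1b

section relCotLemmas
variable (W : Type) {B : Type} [CommRing W] [IsLocalRing W] [CommRing B]
    (ι : W →+* B) (m : Ideal B)

lemma relCotMk_smul (z : B) (x : ↥m) :
    z • relCotMk W ι m x = relCotMk W ι m (z • x) :=
  (Submodule.Quotient.mk_smul _ _ _).symm

lemma relCotMk_add (x y : ↥m) :
    relCotMk W ι m (x + y) = relCotMk W ι m x + relCotMk W ι m y := rfl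

lemma relCotMk_eq_zero {x : ↥m}
    (h : (x : B) ∈ (m ^ 2 ⊔ (maximalIdeal W).map ι : Ideal B)) :
    relCotMk W ι m x = 0 :=
  (Submodule.Quotient.mk_eq_zero _).mpr h

lemma relCotMk_surjective : Function.Surjective (relCotMk W ι m) :=
  Submodule.Quotient.mk_surjective _

lemma relCot_smul_eq_zero {z : B} (hz : z ∈ m) (t : relCot W ι m) :
    z • t = 0 := by
  obtain ⟨x, rfl⟩ := relCotMk_surjective W ι m t
  rw [relCotMk_smul]
  refine relCotMk_eq_zero W ι m ?_
  refine Ideal.mem_sup_left ?_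
  have : (↑(z • x) : B) = z * (x : B) := rfl
  rw [this, pow_two]
  exact Ideal.mul_mem_mul hz x.2
end relCotLemmas

section iota
variable (W R : Type) [CommRing W] [IsLocalRing W]
  [CommRing R] [IsLocalRing R] [Algebra W R]

/-- the ideal `m_R² + m_W R` -/
noncomputable def idealIR : Ideal R :=
  maximalIdeal R ^ 2 ⊔ (maximalIdeal W).map (algebraMap W R)

/-- `D = R/(m_R² + m_W R)` -/
noncomputable abbrev quotD : Type := R ⧸ idealIR W R

/-- `k → D` -/
noncomputable def phiK : ResidueField W →+* quotD W R :=
  Ideal.Quotient.lift (maximalIdeal W)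
    ((Ideal.Quotient.mk (idealIR W R)).comp (algebraMap W R))
    (fun w hw => by
      simp only [RingHom.comp_apply]
      exact Ideal.Quotient.eq_zero_iff_mem.mpr
        (Ideal.mem_sup_right (Ideal.mem_map_of_mem _ hw)))

lemma phiK_residue (w : W) :
    phiK W R (residue W w) = Ideal.Quotient.mk (idealIR W R) (algebraMap W R w) := rfl

/-- `T → D`, `R`-linear -/
noncomputable def iotaR :
    relCot W (algebraMap W R) (maximalIdeal R) →ₗ[R] quotD W R :=
  Submodule.liftQ _
    ((Submodule.mkQ ((idealIR W R : Ideal R) : Submodule R R)).comp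
      (Submodule.subtype ((maximalIdeal R : Ideal R) : Submodule R R)))
    (fun x hx => by
      have hx' : (x : R) ∈ (idealIR W R : Submodule R R) := hx
      simpa using (Submodule.Quotient.mk_eq_zero _).mpr hx')

lemma iotaR_mk (x : ↥(maximalIdeal R)) :
    iotaR W R (relCotMk W (algebraMap W R) (maximalIdeal R) x)
      = Ideal.Quotient.mk (idealIR W R) (x : R) := rfl

lemma iotaR_injective : Function.Injective (iotaR W R) := by
  rw [← LinearMap.ker_eq_bot]
  refine Submodule.ker_liftQ_eq_bot _ _ _ ?_
  intro x hx
  simp only [LinearMap.mem_ker, LinearMap.comp_apply, Submodule.mkQ_apply,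
    Submodule.Quotient.mk_eq_zero] at hx
  exact hx
end iota

section iotaK
variable (W R : Type) [CommRing W] [IsLocalRing W]
  [CommRing R] [IsLocalRing R] [Algebra W R]

noncomputable instance : Algebra (ResidueField W) (quotD W R) := (phiK W R).toAlgebra

lemma quotD_smul (r : R) (d : quotD W R) :
    r • d = Ideal.Quotient.mk (idealIR W R) r * d := by
  obtain ⟨s, rfl⟩ := Ideal.Quotient.mk_surjective d
  calc r • (Ideal.Quotient.mk (idealIR W R) s)
      = Ideal.Quotient.mk (idealIR W R) (r • s) :=
        (Submodule.Quotient.mk_smul (idealIR W R : Submodule R R) r s).symm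
    _ = _ := by rw [smul_eq_mul, map_mul]

lemma quotD_ksmul (w : W) (d : quotD W R) :
    (residue W w) • d = (algebraMap W R w) • d := by
  rw [quotD_smul]
  rfl

variable [instT : Module (ResidueField W) (relCot W (algebraMap W R) (maximalIdeal R))]

noncomputable def iotaKLin
    (hT : ∀ (w : W) (t : relCot W (algebraMap W R) (maximalIdeal R)),
      (residue W w) • t = (algebraMap W R w) • t) :
    relCot W (algebraMap W R) (maximalIdeal R) →ₗ[ResidueField W] quotD W R where
  toFun := iotaR W R
  map_add' := map_add _
  map_smul' := by
    intro c t
    obtain ⟨w, rfl⟩ := Ideal.Quotient.mk_surjective c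
    show iotaR W R ((residue W w) • t) = (residue W w) • iotaR W R t
    rw [hT, map_smul, quotD_ksmul]

lemma iotaKLin_injective (hT : ∀ (w : W) (t : relCot W (algebraMap W R) (maximalIdeal R)),
      (residue W w) • t = (algebraMap W R w) • t) :
    Function.Injective (iotaKLin W R hT) :=
  iotaR_injective W R
end iotaK


section gmap
variable (W W' R : Type) [CommRing W] [IsLocalRing W]
  [CommRing W'] [IsLocalRing W'] [Algebra W W']
  [CommRing R] [IsLocalRing R] [Algebra W R]
  [instk : Algebra (ResidueField W) (ResidueField W')]

local notation "X" => TensorProduct (ResidueField W) (ResidueField W') (quotD W R)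

noncomputable instance algWX : Algebra W X :=
  ((algebraMap (ResidueField W) X).comp (residue W)).toAlgebra

lemma algWX_apply (w : W) :
    algebraMap W X w = algebraMap (ResidueField W) X (residue W w) := rfl

noncomputable def gLeft
    (hk : ∀ w : W, algebraMap (ResidueField W) (ResidueField W') (residue W w) =
      residue W' (algebraMap W W' w)) : W' →ₐ[W] X where
  toRingHom := (Algebra.TensorProduct.includeLeftRingHom :
      ResidueField W' →+* X).comp (residue W')
  commutes' := fun w => by
    show (residue W' (algebraMap W W' w)) ⊗ₜ (1 : quotD W R) = algebraMap W X w
    rw [algWX_apply, Algebra.TensorProduct.algebraMap_apply, hk]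

noncomputable def gRight
    (hk : ∀ w : W, algebraMap (ResidueField W) (ResidueField W') (residue W w) =
      residue W' (algebraMap W W' w)) : R →ₐ[W] X where
  toRingHom := (Algebra.TensorProduct.includeRight :
      quotD W R →ₐ[ResidueField W] X).toRingHom.comp (Ideal.Quotient.mk (idealIR W R))
  commutes' := fun w => by
    show (1 : ResidueField W') ⊗ₜ (Ideal.Quotient.mk (idealIR W R) (algebraMap W R w))
        = algebraMap W X w
    rw [algWX_apply, Algebra.TensorProduct.algebraMap_apply]
    have h1 : Ideal.Quotient.mk (idealIR W R) (algebraMap W R w)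
        = algebraMap (ResidueField W) (quotD W R) (residue W w) := rfl
    rw [h1, Algebra.algebraMap_eq_smul_one, TensorProduct.tmul_smul,
      Algebra.algebraMap_eq_smul_one (A := ResidueField W'), TensorProduct.smul_tmul']

noncomputable def gOmega
    (hk : ∀ w : W, algebraMap (ResidueField W) (ResidueField W') (residue W w) =
      residue W' (algebraMap W W' w)) : TensorProduct W W' R →ₐ[W] X :=
  Algebra.TensorProduct.productMap (gLeft W W' R hk) (gRight W W' R hk)

lemma gOmega_tmul (hk : ∀ w : W, algebraMap (ResidueField W) (ResidueField W') (residue W w) =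
      residue W' (algebraMap W W' w)) (w' : W') (r : R) :
    gOmega W W' R hk (w' ⊗ₜ r) = (residue W' w') ⊗ₜ (Ideal.Quotient.mk (idealIR W R) r) := by
  rw [gOmega, Algebra.TensorProduct.productMap_apply_tmul]
  show (residue W' w' ⊗ₜ (1 : quotD W R)) * ((1 : ResidueField W') ⊗ₜ _) = _
  rw [Algebra.TensorProduct.tmul_mul_tmul, mul_one, one_mul]
end gmap

section gvanish
variable (W W' R : Type) [CommRing W] [IsLocalRing W]
  [CommRing W'] [IsLocalRing W'] [Algebra W W']
  [CommRing R] [IsLocalRing R] [Algebra W R]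
  [instk : Algebra (ResidueField W) (ResidueField W')]
  (hk : ∀ w : W, algebraMap (ResidueField W) (ResidueField W') (residue W w) =
      residue W' (algebraMap W W' w))

local notation "X" => TensorProduct (ResidueField W) (ResidueField W') (quotD W R)

/-- the ideal `E = (1 ⊗ m_R)·X` in `X` -/
noncomputable def idealE : Ideal (TensorProduct (ResidueField W) (ResidueField W') (quotD W R)) :=
  Ideal.map (Algebra.TensorProduct.includeRight :
      quotD W R →ₐ[ResidueField W] X).toRingHom
    (Ideal.map (Ideal.Quotient.mk (idealIR W R)) (maximalIdeal R))

lemma idealE_mul_self : idealE W W' R * idealE W W' R = ⊥ := by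
  have h1 : Ideal.map (Ideal.Quotient.mk (idealIR W R))
      (maximalIdeal R * maximalIdeal R) = ⊥ := by
    rw [Ideal.map_eq_bot_iff_le_ker, Ideal.mk_ker]
    calc maximalIdeal R * maximalIdeal R = maximalIdeal R ^ 2 := (pow_two _).symm
      _ ≤ idealIR W R := le_sup_left
  rw [idealE, ← Ideal.map_mul, ← Ideal.map_mul, h1, Ideal.map_bot]

lemma gOmega_ker_left :
    Ideal.map (Algebra.TensorProduct.includeLeftRingHom : W' →+* TensorProduct W W' R)
      (maximalIdeal W') ≤ RingHom.ker (gOmega W W' R hk).toRingHom := by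
  rw [Ideal.map_le_iff_le_comap]
  intro w' hw'
  simp only [Ideal.mem_comap, RingHom.mem_ker]
  show gOmega W W' R hk (w' ⊗ₜ 1) = 0
  rw [gOmega_tmul]
  have h0 : residue W' w' = 0 := Ideal.Quotient.eq_zero_iff_mem.mpr hw'
  rw [h0, TensorProduct.zero_tmul]

lemma gOmega_mem_idealE {a : TensorProduct W W' R} (ha : a ∈ tensorMaxIdeal W W' R) :
    gOmega W W' R hk a ∈ idealE W W' R := by
  obtain ⟨y, hy, z, hz, rfl⟩ := Submodule.mem_sup.mp ha
  rw [map_add]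
  have h1 : gOmega W W' R hk y = 0 := gOmega_ker_left W W' R hk hy
  rw [h1, zero_add]
  have h2 : gOmega W W' R hk z ∈ Ideal.map (gOmega W W' R hk).toRingHom
      ((maximalIdeal R).map
        ((Algebra.TensorProduct.includeRight : R →ₐ[W] TensorProduct W W' R) : R →+* _)) :=
    Ideal.mem_map_of_mem _ hz
  rw [Ideal.map_map] at h2
  refine Ideal.map_le_iff_le_comap.mpr ?_ h2
  intro x hx
  simp only [Ideal.mem_comap, RingHom.comp_apply]
  show gOmega W W' R hk ((1 : W') ⊗ₜ x) ∈ idealE W W' R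
  rw [gOmega_tmul]
  have h3 : (residue W' (1:W')) ⊗ₜ (Ideal.Quotient.mk (idealIR W R) x)
      = (Algebra.TensorProduct.includeRight :
          quotD W R →ₐ[ResidueField W] X).toRingHom (Ideal.Quotient.mk (idealIR W R) x) := by
    rw [map_one]; rfl
  rw [h3]
  exact Ideal.mem_map_of_mem _ (Ideal.mem_map_of_mem _ hx)

lemma gOmega_vanish {a : TensorProduct W W' R}
    (ha : a ∈ (tensorMaxIdeal W W' R ^ 2 ⊔
      (maximalIdeal W').map
        (Algebra.TensorProduct.includeLeftRingHom : W' →+* TensorProduct W W' R) :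
        Ideal (TensorProduct W W' R))) :
    gOmega W W' R hk a = 0 := by
  revert a
  have : (tensorMaxIdeal W W' R ^ 2 ⊔ (maximalIdeal W').map
      (Algebra.TensorProduct.includeLeftRingHom : W' →+* TensorProduct W W' R) :
      Ideal (TensorProduct W W' R)) ≤ RingHom.ker (gOmega W W' R hk).toRingHom := by
    refine sup_le ?_ (gOmega_ker_left W W' R hk)
    rw [pow_two]
    refine Ideal.mul_le.mpr ?_
    intro r hr s hs
    rw [RingHom.mem_ker]
    show gOmega W W' R hk (r * s) = 0
    rw [map_mul]
    have := Ideal.mul_mem_mul (gOmega_mem_idealE W W' R hk hr)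
      (gOmega_mem_idealE W W' R hk hs)
    rw [idealE_mul_self] at this
    exact this
  intro a ha
  exact this ha

noncomputable def nuFun :
    relCot W' (Algebra.TensorProduct.includeLeftRingHom :
        W' →+* TensorProduct W W' R) (tensorMaxIdeal W W' R) →
      TensorProduct (ResidueField W) (ResidueField W') (quotD W R) :=
  Quotient.lift (fun y : ↥(tensorMaxIdeal W W' R) => gOmega W W' R hk y.1)
    (fun a b hab => by
      have h0 : a - b ∈ Submodule.comap (Submodule.subtype (tensorMaxIdeal W W' R))
          ((tensorMaxIdeal W W' R ^ 2 ⊔ (maximalIdeal W').map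
            (Algebra.TensorProduct.includeLeftRingHom : W' →+* TensorProduct W W' R) :
            Ideal (TensorProduct W W' R)) : Submodule (TensorProduct W W' R)
              (TensorProduct W W' R)) := (Submodule.quotientRel_def _).mp hab
      have h2 : gOmega W W' R hk ((a : TensorProduct W W' R)
          - (b : TensorProduct W W' R)) = 0 := gOmega_vanish W W' R hk h0
      rw [map_sub] at h2
      show gOmega W W' R hk (a : TensorProduct W W' R)
        = gOmega W W' R hk (b : TensorProduct W W' R)
      exact sub_eq_zero.mp h2)

lemma nuFun_mk (x : ↥(tensorMaxIdeal W W' R)) :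
    nuFun W W' R hk (relCotMk W' (Algebra.TensorProduct.includeLeftRingHom :
        W' →+* TensorProduct W W' R) (tensorMaxIdeal W W' R) x)
      = gOmega W W' R hk x.1 := rfl

lemma nuFun_add (s t : relCot W' (Algebra.TensorProduct.includeLeftRingHom :
    W' →+* TensorProduct W W' R) (tensorMaxIdeal W W' R)) :
    nuFun W W' R hk (s + t) = nuFun W W' R hk s + nuFun W W' R hk t := by
  obtain ⟨x, rfl⟩ := relCotMk_surjective W' _ _ s
  obtain ⟨y, rfl⟩ := relCotMk_surjective W' _ _ t
  rw [← relCotMk_add, nuFun_mk, nuFun_mk, nuFun_mk]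
  exact map_add _ _ _

lemma nuFun_zero : nuFun W W' R hk 0 = 0 := by
  have h0 : (0 : relCot W' (Algebra.TensorProduct.includeLeftRingHom :
      W' →+* TensorProduct W W' R) (tensorMaxIdeal W W' R))
      = relCotMk W' _ _ 0 := rfl
  rw [h0, nuFun_mk]
  exact map_zero _
end gvanish


attribute [-instance] IsLocalRing.ResidueField.instModule

set_option maxHeartbeats 1000000 in
set_option synthInstance.maxHeartbeats 400000 in
/-- Let `W → W'` be a local homomorphism of complete local commutative
Noetherian rings with residue fields `k`, `k'`, and let `R` be a complete local commutative
Noetherian `W`-algebra with residue field `k`.  Let `Ω = W' ⊗_W R` and `m_Ω` the ideal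
generated by the images of `m_{W'}` and `m_R`.  Then `Ω/m_Ω ≅ k'` and the natural `k'`-linear
map `k' ⊗_k (m_R/(m_R² + m_W R)) → m_Ω/(m_Ω² + m_{W'} Ω)` is an isomorphism. -/
theorem baseChange_relative_cotangent
    (W : Type) [CommRing W] [IsLocalRing W] [IsNoetherianRing W]
    [IsAdicComplete (maximalIdeal W) W]
    (W' : Type) [CommRing W'] [IsLocalRing W'] [IsNoetherianRing W']
    [IsAdicComplete (maximalIdeal W') W'] [Algebra W W']
    [IsLocalHom (algebraMap W W')]
    (R : Type) [CommRing R] [IsLocalRing R] [IsNoetherianRing R]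
    [IsAdicComplete (maximalIdeal R) R] [Algebra W R]
    [IsLocalHom (algebraMap W R)]
    (hres : Function.Bijective (IsLocalRing.ResidueField.map (algebraMap W R))) :
    -- `Ω/m_Ω ≅ k'`
    Nonempty ((TensorProduct W W' R ⧸ tensorMaxIdeal W W' R) ≃+* ResidueField W') ∧
    -- the natural map `k' ⊗_k T(W,R) → T(W',Ω)` is bijective
    (∀ (instk : Algebra (ResidueField W) (ResidueField W')),
      (∀ w : W, algebraMap (ResidueField W) (ResidueField W') (residue W w) =
          residue W' (algebraMap W W' w)) →
      ∀ (instT : Module (ResidueField W) (relCot W (algebraMap W R) (maximalIdeal R))),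
      (∀ (w : W) (t : relCot W (algebraMap W R) (maximalIdeal R)),
        (residue W w) • t = (algebraMap W R w) • t) →
      ∀ (instT' : Module (ResidueField W')
          (relCot W' (Algebra.TensorProduct.includeLeftRingHom : W' →+* TensorProduct W W' R)
            (tensorMaxIdeal W W' R))),
      (∀ (w' : W')
          (t : relCot W' (Algebra.TensorProduct.includeLeftRingHom : W' →+* TensorProduct W W' R)
            (tensorMaxIdeal W W' R)),
          (residue W' w') • t =
            (Algebra.TensorProduct.includeLeftRingHom w' : TensorProduct W W' R) • t) →
      ∀ (μ : TensorProduct (ResidueField W) (ResidueField W')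
            (relCot W (algebraMap W R) (maximalIdeal R)) →ₗ[ResidueField W']
          relCot W' (Algebra.TensorProduct.includeLeftRingHom : W' →+* TensorProduct W W' R)
            (tensorMaxIdeal W W' R)),
      (∀ (c : ResidueField W') (x : ↥(maximalIdeal R)),
        μ (c ⊗ₜ relCotMk W (algebraMap W R) (maximalIdeal R) x) =
          c • relCotMk W'
            (Algebra.TensorProduct.includeLeftRingHom : W' →+* TensorProduct W W' R)
            (tensorMaxIdeal W W' R)
            ⟨Algebra.TensorProduct.includeRight (x : R),
              Ideal.mem_sup_right (Ideal.mem_map_of_mem _ x.2)⟩) →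
      Function.Bijective μ) := by
  refine ⟨part1 W W' R hres, ?_⟩
  intro instk hinstk instT hinstT instT' hinstT' μ hμ
  -- abbreviations
  refine ⟨?_, ?_⟩
  · -- injectivity
    have hν_mk : ∀ (x : ↥(tensorMaxIdeal W W' R)),
        nuFun W W' R hinstk (relCotMk W' (Algebra.TensorProduct.includeLeftRingHom : W' →+* TensorProduct W W' R)
          (tensorMaxIdeal W W' R) x) = gOmega W W' R hinstk x.1 :=
      nuFun_mk W W' R hinstk
    have hν_smul : ∀ (c : ResidueField W')
        (t : relCot W' (Algebra.TensorProduct.includeLeftRingHom : W' →+* TensorProduct W W' R) (tensorMaxIdeal W W' R)),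
        nuFun W W' R hinstk (c • t) = c • nuFun W W' R hinstk t := by
      intro c t
      obtain ⟨w', rfl⟩ := IsLocalRing.residue_surjective (R := W') c
      obtain ⟨x, rfl⟩ := relCotMk_surjective W'
        (Algebra.TensorProduct.includeLeftRingHom : W' →+* TensorProduct W W' R) (tensorMaxIdeal W W' R) t
      rw [hinstT' w', relCotMk_smul, nuFun_mk, nuFun_mk]
      have h3 : (((Algebra.TensorProduct.includeLeftRingHom : W' →+* TensorProduct W W' R) w' •
          x : ↥(tensorMaxIdeal W W' R)) : TensorProduct W W' R)
          = (w' ⊗ₜ 1) * (x : TensorProduct W W' R) := by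
        rw [Submodule.coe_smul, Algebra.TensorProduct.includeLeftRingHom_apply, smul_eq_mul]
      rw [h3, map_mul, gOmega_tmul, map_one]
      exact (Algebra.smul_def (A := TensorProduct (ResidueField W) (ResidueField W') (quotD W R))
        (residue W' w') (gOmega W W' R hinstk (x : TensorProduct W W' R))).symm
    letI := instk; letI := instT; letI := instT'
    let j := LinearMap.lTensor (R := ResidueField W)
      (ResidueField W') (iotaKLin W R hinstT)
    have hj_inj : Function.Injective j :=
      Module.Flat.lTensor_preserves_injective_linearMap (M := ResidueField W') _
        (iotaKLin_injective W R hinstT)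
    have hcomm : ∀ u, nuFun W W' R hinstk (μ u) = j u := by
      intro u
      induction u with
      | zero => rw [map_zero, map_zero, nuFun_zero]
      | tmul c t =>
          obtain ⟨x, rfl⟩ := relCotMk_surjective W (algebraMap W R) (maximalIdeal R) t
          rw [hμ c x, hν_smul]
          have h2 : nuFun W W' R hinstk (relCotMk W' (Algebra.TensorProduct.includeLeftRingHom : W' →+* TensorProduct W W' R)
              (tensorMaxIdeal W W' R)
              ⟨Algebra.TensorProduct.includeRight (x : R),
                Ideal.mem_sup_right (Ideal.mem_map_of_mem _ x.2)⟩)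
              = gOmega W W' R hinstk ((1 : W') ⊗ₜ (x : R)) := rfl
          rw [h2, gOmega_tmul, map_one]
          show c • ((1 : ResidueField W') ⊗ₜ (Ideal.Quotient.mk (idealIR W R) (x : R)))
            = j (c ⊗ₜ relCotMk W (algebraMap W R) (maximalIdeal R) x)
          rw [TensorProduct.smul_tmul', smul_eq_mul, mul_one]
          show _ = c ⊗ₜ (iotaKLin W R hinstT (relCotMk W (algebraMap W R) (maximalIdeal R) x))
          rfl
      | add u v hu hv => rw [map_add, nuFun_add, hu, hv, map_add]
    intro u v huv
    exact hj_inj (by rw [← hcomm, ← hcomm, huv])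
  · -- surjectivity
    letI := instk; letI := instT; letI := instT'
    have hkill : ∀ z ∈ tensorMaxIdeal W W' R,
        ∀ t : relCot W' (Algebra.TensorProduct.includeLeftRingHom : W' →+* TensorProduct W W' R) (tensorMaxIdeal W W' R),
        z • t = 0 := fun z hz t =>
      relCot_smul_eq_zero W' (Algebra.TensorProduct.includeLeftRingHom : W' →+* TensorProduct W W' R) _ hz t
    have hsmul : ∀ (a : TensorProduct W W' R)
        (t : relCot W' (Algebra.TensorProduct.includeLeftRingHom : W' →+* TensorProduct W W' R) (tensorMaxIdeal W W' R)),
        ∃ c : ResidueField W', a • t = c • t := by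
      intro a t
      obtain ⟨w', hw'⟩ := approx_tensor W W' R hres.surjective a
      refine ⟨residue W' w', ?_⟩
      have h1 : a = (a - w' ⊗ₜ 1) + w' ⊗ₜ 1 := by ring
      rw [h1, add_smul, hkill _ hw', zero_add, hinstT' w' t]
      rfl
    let M : Submodule (TensorProduct W W' R)
        (relCot W' (Algebra.TensorProduct.includeLeftRingHom : W' →+* TensorProduct W W' R) (tensorMaxIdeal W W' R)) :=
      { carrier := Set.range μ,
        zero_mem' := ⟨0, map_zero μ⟩,
        add_mem' := fun ⟨u, hu⟩ ⟨v, hv⟩ => ⟨u + v, by rw [map_add, hu, hv]⟩,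
        smul_mem' := by
          rintro a t ⟨u, rfl⟩
          obtain ⟨c, hc⟩ := hsmul a (μ u)
          exact ⟨c • u, by rw [map_smul, hc]⟩ }
    have hMall : ∀ t : relCot W' (Algebra.TensorProduct.includeLeftRingHom : W' →+* TensorProduct W W' R)
        (tensorMaxIdeal W W' R), t ∈ M := by
      have claim : ∀ (b : TensorProduct W W' R), b ∈ (maximalIdeal R).map
          ((Algebra.TensorProduct.includeRight : R →ₐ[W] TensorProduct W W' R) : R →+* _) →
          ∀ h : b ∈ tensorMaxIdeal W W' R,
          relCotMk W' (Algebra.TensorProduct.includeLeftRingHom : W' →+* TensorProduct W W' R)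
            (tensorMaxIdeal W W' R) ⟨b, h⟩ ∈ M := by
        intro b hb
        refine Submodule.span_induction ?_ ?_ ?_ ?_ hb
        · rintro _ ⟨x, hx, rfl⟩ h
          refine ⟨(1 : ResidueField W') ⊗ₜ
            relCotMk W (algebraMap W R) (maximalIdeal R) ⟨x, hx⟩, ?_⟩
          rw [hμ 1 ⟨x, hx⟩, one_smul]
          rfl
        · intro h
          have h0 : relCotMk W'
              (Algebra.TensorProduct.includeLeftRingHom : W' →+* TensorProduct W W' R)
              (tensorMaxIdeal W W' R) ⟨0, h⟩ = 0 := Submodule.Quotient.mk_zero _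
          rw [h0]
          exact M.zero_mem
        · intro b1 b2 hb1 hb2 ih1 ih2 h
          have hm1 : b1 ∈ tensorMaxIdeal W W' R := Ideal.mem_sup_right hb1
          have hm2 : b2 ∈ tensorMaxIdeal W W' R := Ideal.mem_sup_right hb2
          have he : (⟨b1 + b2, h⟩ : ↥(tensorMaxIdeal W W' R)) = ⟨b1, hm1⟩ + ⟨b2, hm2⟩ := rfl
          rw [he, relCotMk_add]
          exact M.add_mem (ih1 hm1) (ih2 hm2)
        · intro a b hb ih h
          have hm : b ∈ tensorMaxIdeal W W' R := Ideal.mem_sup_right hb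
          have he : relCotMk W' (Algebra.TensorProduct.includeLeftRingHom : W' →+* TensorProduct W W' R)
              (tensorMaxIdeal W W' R) ⟨a • b, h⟩
              = a • relCotMk W' (Algebra.TensorProduct.includeLeftRingHom : W' →+* TensorProduct W W' R)
                (tensorMaxIdeal W W' R) ⟨b, hm⟩ := by
            rw [relCotMk_smul]
            rfl
          rw [he]
          exact M.smul_mem a (ih hm)
      intro t
      obtain ⟨y, rfl⟩ := relCotMk_surjective W'
        (Algebra.TensorProduct.includeLeftRingHom : W' →+* TensorProduct W W' R) (tensorMaxIdeal W W' R) t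
      obtain ⟨a, ha, b, hb, hab⟩ := Submodule.mem_sup.mp y.2
      have hma : a ∈ tensorMaxIdeal W W' R := Ideal.mem_sup_left ha
      have hmb : b ∈ tensorMaxIdeal W W' R := Ideal.mem_sup_right hb
      have hy : y = ⟨a, hma⟩ + ⟨b, hmb⟩ := Subtype.ext hab.symm
      rw [hy, relCotMk_add, relCotMk_eq_zero W' _ _ (Ideal.mem_sup_right ha), zero_add]
      exact claim b hb hmb
    intro t
    exact hMall t
end

section
/- Let k be a perfect field of characteristic p > 0, let W = W(k) be the ring of p-typical Witt vectors over k, and let n ≥ 1. Let I be an ideal of W[[t]] with I ⊆ (p^n t, t²) such that (p^n t, t²)/I is one-dimensional as a k-vector space. Then (p^{n+1} t, p t², t³) ⊆ I, and there exist a, b ∈ W, at least one of which is a unit, such that I = (p^{n+1} t, p t², t³, a p^n t + b t²). Moreover, (p^n t, t²)/(p^{n+1} t, p t², t³) is a two-dimensional k-vector space with basis given by the classes of p^n t and t². -/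
open PowerSeries

private lemma memSpanPair_iff' {A : Type*} [CommRing A] (a : A) (g : A⟦X⟧) :
    g ∈ Ideal.span {PowerSeries.C a * X, X ^ 2} ↔
      PowerSeries.coeff 0 g = 0 ∧ a ∣ PowerSeries.coeff 1 g := by
  constructor
  · intro hg
    rw [show ({PowerSeries.C a * X, X ^ 2} : Set A⟦X⟧)
        = insert (PowerSeries.C a * X) {X ^ 2} from rfl, Ideal.mem_span_insert] at hg
    obtain ⟨u, z, hz, rfl⟩ := hg
    rw [Ideal.mem_span_singleton] at hz
    obtain ⟨w, rfl⟩ := hz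
    constructor
    · simp
    · refine ⟨PowerSeries.coeff 0 u, ?_⟩
      have h1 : u * (PowerSeries.C a * X) = (u * PowerSeries.C a) * X := by ring
      have h2 : (X : A⟦X⟧) ^ 2 * w = w * X ^ 2 := by ring
      rw [map_add, h1, h2, PowerSeries.coeff_succ_mul_X, PowerSeries.coeff_mul_C,
        PowerSeries.coeff_mul_X_pow']
      simp [mul_comm]
  · rintro ⟨h0, hu⟩
    rw [PowerSeries.coeff_zero_eq_constantCoeff] at h0
    obtain ⟨f, rfl⟩ := PowerSeries.X_dvd_iff.mpr h0
    obtain ⟨u, hu⟩ := hu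
    have hf0 : PowerSeries.coeff 0 f = a * u := by
      simpa [PowerSeries.coeff_succ_mul_X, mul_comm] using hu
    obtain ⟨h, hh⟩ := PowerSeries.X_dvd_iff.mpr
      (show PowerSeries.constantCoeff (f - PowerSeries.C (a * u)) = 0 by simp [← hf0])
    have hf : f = PowerSeries.C (a * u) + X * h := by linear_combination hh
    have : X * f = PowerSeries.C u * (PowerSeries.C a * X) + h * X ^ 2 := by
      rw [hf, map_mul]; ring
    rw [this]
    exact Ideal.add_mem _
      (Ideal.mul_mem_left _ _ (Ideal.subset_span (by simp)))
      (Ideal.mul_mem_left _ _ (Ideal.subset_span (by simp)))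

private lemma memSpanTriple_iff' {A : Type*} [CommRing A] (a b : A) (hab : b ∣ a) (g : A⟦X⟧) :
    g ∈ Ideal.span {PowerSeries.C a * X, PowerSeries.C b * X ^ 2, X ^ 3} ↔
      PowerSeries.coeff 0 g = 0 ∧ a ∣ PowerSeries.coeff 1 g ∧
        b ∣ PowerSeries.coeff 2 g := by
  constructor
  · intro hg
    rw [show ({PowerSeries.C a * X, PowerSeries.C b * X ^ 2, X ^ 3} : Set A⟦X⟧)
        = insert (PowerSeries.C a * X) (insert (PowerSeries.C b * X ^ 2) {X ^ 3}) from rfl,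
      Ideal.mem_span_insert] at hg
    obtain ⟨u, z, hz, rfl⟩ := hg
    rw [Ideal.mem_span_insert] at hz
    obtain ⟨v, z', hz', rfl⟩ := hz
    rw [Ideal.mem_span_singleton] at hz'
    obtain ⟨w, rfl⟩ := hz'
    have h1 : u * (PowerSeries.C a * X) + (v * (PowerSeries.C b * X ^ 2) + X ^ 3 * w)
        = (u * PowerSeries.C a) * X + ((v * PowerSeries.C b) * X ^ 2 + w * X ^ 3) := by ring
    rw [h1]
    refine ⟨by simp, ?_, ?_⟩
    · refine ⟨PowerSeries.coeff 0 u, ?_⟩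
      rw [map_add, map_add, PowerSeries.coeff_succ_mul_X, PowerSeries.coeff_mul_C,
        PowerSeries.coeff_mul_X_pow', PowerSeries.coeff_mul_X_pow']
      simp [mul_comm]
    · obtain ⟨e, he⟩ := hab
      refine ⟨e * PowerSeries.coeff 1 u + PowerSeries.coeff 0 v, ?_⟩
      rw [map_add, map_add]
      rw [show ((2:ℕ)) = 1 + 1 from rfl, PowerSeries.coeff_succ_mul_X,
        PowerSeries.coeff_mul_C]
      rw [show ((1:ℕ) + 1) = 0 + 2 from rfl, PowerSeries.coeff_mul_X_pow,
        PowerSeries.coeff_mul_C, PowerSeries.coeff_mul_X_pow']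
      simp [he]
      ring
  · rintro ⟨h0, hu, hv⟩
    rw [PowerSeries.coeff_zero_eq_constantCoeff] at h0
    obtain ⟨f, rfl⟩ := PowerSeries.X_dvd_iff.mpr h0
    obtain ⟨u, hu⟩ := hu
    obtain ⟨v, hv⟩ := hv
    have hf0 : PowerSeries.coeff 0 f = a * u := by
      simpa [PowerSeries.coeff_succ_mul_X, mul_comm] using hu
    have hf1 : PowerSeries.coeff 1 f = b * v := by
      have : PowerSeries.coeff 2 (X * f) = PowerSeries.coeff 1 f := by
        rw [mul_comm, show ((2:ℕ)) = 1 + 1 from rfl, PowerSeries.coeff_succ_mul_X]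
      rw [← this, hv]
    obtain ⟨h, hh⟩ : (X : A⟦X⟧) ^ 2 ∣ f - PowerSeries.C (a * u) - PowerSeries.C (b * v) * X := by
      rw [PowerSeries.X_pow_dvd_iff]
      intro m hm
      interval_cases m <;> simp [← PowerSeries.coeff_zero_eq_constantCoeff, hf0, hf1, PowerSeries.coeff_zero_mul_X]
    have hf : f = PowerSeries.C (a * u) + PowerSeries.C (b * v) * X + X ^ 2 * h := by
      linear_combination hh
    have : X * f = PowerSeries.C u * (PowerSeries.C a * X)
        + (PowerSeries.C v * (PowerSeries.C b * X ^ 2) + h * X ^ 3) := by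
      rw [hf, map_mul, map_mul]; ring
    rw [this]
    refine Ideal.add_mem _
      (Ideal.mul_mem_left _ _ (Ideal.subset_span (by simp))) (Ideal.add_mem _
      (Ideal.mul_mem_left _ _ (Ideal.subset_span (by simp)))
      (Ideal.mul_mem_left _ _ (Ideal.subset_span (by simp))))
open PowerSeries


set_option maxHeartbeats 1000000 in

/-- Lemma 3.5 of Bleher–Chinburg–de Smit.  Let `W = W(k)` and let
`I ⊆ (pⁿt, t²)` be an ideal of `W[[t]]` such that `(pⁿt, t²)/I` is one-dimensional over `k`
(equivalently: `I ≠ (pⁿt, t²)` and modulo `I` every element of `(pⁿt, t²)` is a multiple of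
any element of `(pⁿt, t²) \ I`).  Then `(pⁿ⁺¹t, pt², t³) ⊆ I`, and
`I = (pⁿ⁺¹t, pt², t³, a pⁿ t + b t²)` for some `a, b ∈ W` at least one of which is a unit.
Moreover `(pⁿt, t²)/(pⁿ⁺¹t, pt², t³)` is two-dimensional over `k` with basis the classes of
`pⁿt` and `t²` (they span, and a combination `c·pⁿt + d·t²` lies in `(pⁿ⁺¹t, pt², t³)` exactly
when both coefficients `c, d` lie in the maximal ideal of `W[[t]]`). -/
theorem ideal_between_description
    (p : ℕ) [Fact p.Prime] (k : Type) [Field k] [CharP k p] [PerfectRing k p]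
    (n : ℕ) (hn : 1 ≤ n)
    (I : Ideal (PowerSeries (WittVector p k)))
    (hIJ : I ≤ Ideal.span {(p : PowerSeries (WittVector p k)) ^ n * PowerSeries.X,
      PowerSeries.X ^ 2})
    (hne : I ≠ Ideal.span {(p : PowerSeries (WittVector p k)) ^ n * PowerSeries.X,
      PowerSeries.X ^ 2})
    -- `(pⁿt, t²)/I` is one-dimensional over `k`
    (hdim : ∀ x ∈ Ideal.span {(p : PowerSeries (WittVector p k)) ^ n * PowerSeries.X,
        PowerSeries.X ^ 2},
      ∀ y ∈ Ideal.span {(p : PowerSeries (WittVector p k)) ^ n * PowerSeries.X,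
        PowerSeries.X ^ 2}, y ∉ I →
        ∃ c : PowerSeries (WittVector p k), x - c * y ∈ I) :
    -- `(pⁿ⁺¹t, pt², t³) ⊆ I`
    Ideal.span {(p : PowerSeries (WittVector p k)) ^ (n + 1) * PowerSeries.X,
        (p : PowerSeries (WittVector p k)) * PowerSeries.X ^ 2, PowerSeries.X ^ 3} ≤ I ∧
    -- `I = (pⁿ⁺¹t, pt², t³, a pⁿ t + b t²)` with `a` or `b` a unit
    (∃ a b : WittVector p k, (IsUnit a ∨ IsUnit b) ∧
      I = Ideal.span {(p : PowerSeries (WittVector p k)) ^ (n + 1) * PowerSeries.X,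
        (p : PowerSeries (WittVector p k)) * PowerSeries.X ^ 2, PowerSeries.X ^ 3,
        PowerSeries.C a *
            ((p : PowerSeries (WittVector p k)) ^ n * PowerSeries.X) +
          PowerSeries.C b * PowerSeries.X ^ 2}) ∧
    -- the classes of `pⁿt` and `t²` span `(pⁿt, t²)/(pⁿ⁺¹t, pt², t³)` …
    (∀ x ∈ Ideal.span {(p : PowerSeries (WittVector p k)) ^ n * PowerSeries.X,
        PowerSeries.X ^ 2},
      ∃ c d : PowerSeries (WittVector p k),
        x - (c * ((p : PowerSeries (WittVector p k)) ^ n * PowerSeries.X) +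
            d * PowerSeries.X ^ 2) ∈
          Ideal.span {(p : PowerSeries (WittVector p k)) ^ (n + 1) * PowerSeries.X,
            (p : PowerSeries (WittVector p k)) * PowerSeries.X ^ 2, PowerSeries.X ^ 3}) ∧
    -- … and are linearly independent over `k`
    (∀ c d : PowerSeries (WittVector p k),
      (c * ((p : PowerSeries (WittVector p k)) ^ n * PowerSeries.X) +
          d * PowerSeries.X ^ 2 ∈
        Ideal.span {(p : PowerSeries (WittVector p k)) ^ (n + 1) * PowerSeries.X,
          (p : PowerSeries (WittVector p k)) * PowerSeries.X ^ 2, PowerSeries.X ^ 3}) ↔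
        (¬IsUnit c ∧ ¬IsUnit d)) := by
  haveI : IsDiscreteValuationRing (WittVector p k) := WittVector.isDiscreteValuationRing
  have hirr : Irreducible (p : WittVector p k) := WittVector.irreducible p
  have hW : ∀ x : WittVector p k, ¬IsUnit x ↔ (p : WittVector p k) ∣ x := by
    intro x
    rw [← mem_nonunits_iff, ← IsLocalRing.mem_maximalIdeal, hirr.maximalIdeal_eq,
      Ideal.mem_span_singleton]
  have hpn0 : (p : WittVector p k) ^ n ≠ 0 := pow_ne_zero _ hirr.ne_zero
  have e1 : ((p : PowerSeries (WittVector p k)) ^ (n + 1) * PowerSeries.X)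
      = PowerSeries.C ((p : WittVector p k) ^ (n + 1)) * PowerSeries.X := by
    rw [map_pow, map_natCast]
  have e2 : ((p : PowerSeries (WittVector p k)) * PowerSeries.X ^ 2)
      = PowerSeries.C ((p : WittVector p k)) * PowerSeries.X ^ 2 := by rw [map_natCast]
  have en : ((p : PowerSeries (WittVector p k)) ^ n * PowerSeries.X)
      = PowerSeries.C ((p : WittVector p k) ^ n) * PowerSeries.X := by
    rw [map_pow, map_natCast]
  have hKmem : ∀ g : PowerSeries (WittVector p k),
      g ∈ Ideal.span {(p : PowerSeries (WittVector p k)) ^ (n + 1) * PowerSeries.X,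
          (p : PowerSeries (WittVector p k)) * PowerSeries.X ^ 2, PowerSeries.X ^ 3} ↔
        PowerSeries.coeff 0 g = 0 ∧ ((p : WittVector p k) ^ (n + 1) ∣ PowerSeries.coeff 1 g)
          ∧ ((p : WittVector p k) ∣ PowerSeries.coeff 2 g) := by
    intro g
    rw [e1, e2]
    exact memSpanTriple_iff' _ _ (dvd_pow_self _ (Nat.succ_ne_zero n)) g
  have hJmem : ∀ g : PowerSeries (WittVector p k),
      g ∈ Ideal.span {(p : PowerSeries (WittVector p k)) ^ n * PowerSeries.X,
          PowerSeries.X ^ 2} ↔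
        PowerSeries.coeff 0 g = 0 ∧ ((p : WittVector p k) ^ n ∣ PowerSeries.coeff 1 g) := by
    intro g
    rw [en]
    exact memSpanPair_iff' _ g
  -- Part 4: linear independence characterization
  have hlin : ∀ c d : PowerSeries (WittVector p k),
      (c * ((p : PowerSeries (WittVector p k)) ^ n * PowerSeries.X) +
          d * PowerSeries.X ^ 2 ∈
        Ideal.span {(p : PowerSeries (WittVector p k)) ^ (n + 1) * PowerSeries.X,
          (p : PowerSeries (WittVector p k)) * PowerSeries.X ^ 2, PowerSeries.X ^ 3}) ↔
        (¬IsUnit c ∧ ¬IsUnit d) := by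
    intro c d
    rw [hKmem]
    have hre : c * ((p : PowerSeries (WittVector p k)) ^ n * PowerSeries.X) + d * PowerSeries.X ^ 2
        = (c * PowerSeries.C ((p : WittVector p k) ^ n)) * PowerSeries.X
          + d * PowerSeries.X ^ 2 := by rw [en]; ring
    rw [hre]
    have h0 : PowerSeries.coeff 0
        ((c * PowerSeries.C ((p : WittVector p k) ^ n)) * PowerSeries.X
          + d * PowerSeries.X ^ 2) = 0 := by
      rw [map_add, PowerSeries.coeff_zero_mul_X, PowerSeries.coeff_mul_X_pow']
      simp
    have h1 : PowerSeries.coeff 1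
        ((c * PowerSeries.C ((p : WittVector p k) ^ n)) * PowerSeries.X
          + d * PowerSeries.X ^ 2)
        = PowerSeries.coeff 0 c * (p : WittVector p k) ^ n := by
      rw [map_add, PowerSeries.coeff_succ_mul_X, PowerSeries.coeff_mul_C,
        PowerSeries.coeff_mul_X_pow']
      simp
    have h2 : PowerSeries.coeff 2
        ((c * PowerSeries.C ((p : WittVector p k) ^ n)) * PowerSeries.X
          + d * PowerSeries.X ^ 2)
        = PowerSeries.coeff 1 c * (p : WittVector p k) ^ n + PowerSeries.coeff 0 d := by
      rw [map_add, show ((2 : ℕ)) = 1 + 1 from rfl, PowerSeries.coeff_succ_mul_X,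
        PowerSeries.coeff_mul_C, show ((1 : ℕ) + 1) = 0 + 2 from rfl,
        PowerSeries.coeff_mul_X_pow]
    rw [h0, h1, h2]
    have hd1 : ((p : WittVector p k) ^ (n + 1) ∣ PowerSeries.coeff 0 c * (p : WittVector p k) ^ n)
        ↔ (p : WittVector p k) ∣ PowerSeries.coeff 0 c := by
      rw [pow_succ, mul_comm (PowerSeries.coeff 0 c), mul_dvd_mul_iff_left hpn0]
    have hd2 : ((p : WittVector p k) ∣
          PowerSeries.coeff 1 c * (p : WittVector p k) ^ n + PowerSeries.coeff 0 d)
        ↔ (p : WittVector p k) ∣ PowerSeries.coeff 0 d := by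
      have : (p : WittVector p k) ∣ PowerSeries.coeff 1 c * (p : WittVector p k) ^ n :=
        Dvd.dvd.mul_left (dvd_pow_self _ (by omega : n ≠ 0)) _
      exact dvd_add_right this
    rw [hd1, hd2]
    rw [PowerSeries.isUnit_iff_constantCoeff, PowerSeries.isUnit_iff_constantCoeff, hW, hW,
      PowerSeries.coeff_zero_eq_constantCoeff]
    exact ⟨fun h => ⟨h.2.1, h.2.2⟩, fun h => ⟨rfl, h.1, h.2⟩⟩
  -- a sample element of J not in I
  obtain ⟨y, hyJ, hyI⟩ : ∃ y, y ∈ Ideal.span {(p : PowerSeries (WittVector p k)) ^ n *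
      PowerSeries.X, PowerSeries.X ^ 2} ∧ y ∉ I := by
    by_contra hcon
    push_neg at hcon
    exact hne (le_antisymm hIJ hcon)
  have step1 : ∀ m : PowerSeries (WittVector p k), ¬IsUnit m → m * y ∈ I := by
    intro m hm
    by_contra hmy
    obtain ⟨c, hc⟩ := hdim y hyJ (m * y) (Ideal.mul_mem_left _ _ hyJ) hmy
    have hcm : IsUnit (1 - c * m) :=
      IsLocalRing.isUnit_one_sub_self_of_mem_nonunits _
        (fun hu => hm (isUnit_of_mul_isUnit_right hu))
    obtain ⟨u, hu⟩ := hcm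
    have h1 : y - c * (m * y) = y * ↑u := by rw [hu]; ring
    have h2 : y = (y - c * (m * y)) * ↑u⁻¹ := by
      rw [h1, mul_assoc, Units.mul_inv, mul_one]
    exact hyI (h2 ▸ Ideal.mul_mem_right _ _ hc)
  have step2 : ∀ m : PowerSeries (WittVector p k), ¬IsUnit m →
      ∀ x ∈ Ideal.span {(p : PowerSeries (WittVector p k)) ^ n * PowerSeries.X,
        PowerSeries.X ^ 2}, m * x ∈ I := by
    intro m hm x hx
    obtain ⟨c, hc⟩ := hdim x hx y hyJ hyI
    have h1 : (m * c) * y ∈ I := step1 (m * c) (fun hu => hm (isUnit_of_mul_isUnit_left hu))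
    have h2 : m * (x - c * y) ∈ I := Ideal.mul_mem_left _ _ hc
    have h3 : m * x = m * (x - c * y) + (m * c) * y := by ring
    rw [h3]
    exact Ideal.add_mem _ h2 h1
  have hpR : ¬IsUnit ((p : PowerSeries (WittVector p k))) := by
    rw [PowerSeries.isUnit_iff_constantCoeff, map_natCast]
    exact hirr.not_isUnit
  have hXR : ¬IsUnit (PowerSeries.X : PowerSeries (WittVector p k)) := by
    rw [PowerSeries.isUnit_iff_constantCoeff, PowerSeries.constantCoeff_X]
    exact not_isUnit_zero
  have hKI : Ideal.span {(p : PowerSeries (WittVector p k)) ^ (n + 1) * PowerSeries.X,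
      (p : PowerSeries (WittVector p k)) * PowerSeries.X ^ 2, PowerSeries.X ^ 3} ≤ I := by
    rw [Ideal.span_le]
    rintro g hg
    simp only [Set.mem_insert_iff, Set.mem_singleton_iff] at hg
    rcases hg with rfl | rfl | rfl
    · have h : (p : PowerSeries (WittVector p k)) ^ (n + 1) * PowerSeries.X
          = (p : PowerSeries (WittVector p k)) *
            ((p : PowerSeries (WittVector p k)) ^ n * PowerSeries.X) := by ring
      rw [h]
      exact step2 _ hpR _ (Ideal.subset_span (by simp))
    · exact step2 _ hpR _ (Ideal.subset_span (by simp))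
    · have h : (PowerSeries.X : PowerSeries (WittVector p k)) ^ 3
          = PowerSeries.X * PowerSeries.X ^ 2 := by ring
      rw [h]
      exact step2 _ hXR _ (Ideal.subset_span (by simp))
  have hnotboth : ¬((p : PowerSeries (WittVector p k)) ^ n * PowerSeries.X ∈ I ∧
      (PowerSeries.X : PowerSeries (WittVector p k)) ^ 2 ∈ I) := by
    rintro ⟨h1, h2⟩
    refine hne (le_antisymm hIJ ?_)
    rw [Ideal.span_le]
    rintro g hg
    simp only [Set.mem_insert_iff, Set.mem_singleton_iff] at hg
    rcases hg with rfl | rfl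
    exacts [h1, h2]
  -- find an element of I not in K
  obtain ⟨z, hzI, hzK⟩ : ∃ z ∈ I, z ∉ Ideal.span
      {(p : PowerSeries (WittVector p k)) ^ (n + 1) * PowerSeries.X,
        (p : PowerSeries (WittVector p k)) * PowerSeries.X ^ 2, PowerSeries.X ^ 3} := by
    by_contra hcon
    push_neg at hcon
    have hX2I : (PowerSeries.X : PowerSeries (WittVector p k)) ^ 2 ∉ I := by
      intro h
      obtain ⟨-, -, hdvd⟩ := (hKmem _).mp (hcon _ h)
      rw [PowerSeries.coeff_X_pow] at hdvd
      simp only [if_pos rfl] at hdvd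
      exact hirr.not_isUnit (isUnit_of_dvd_one hdvd)
    obtain ⟨c, hc⟩ := hdim ((p : PowerSeries (WittVector p k)) ^ n * PowerSeries.X)
      (Ideal.subset_span (by simp)) (PowerSeries.X ^ 2) (Ideal.subset_span (by simp)) hX2I
    obtain ⟨-, hdvd, -⟩ := (hKmem _).mp (hcon _ hc)
    have hco : PowerSeries.coeff 1
        ((p : PowerSeries (WittVector p k)) ^ n * PowerSeries.X - c * PowerSeries.X ^ 2)
        = (p : WittVector p k) ^ n := by
      rw [map_sub, en, PowerSeries.coeff_C_mul, PowerSeries.coeff_mul_X_pow']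
      simp
    rw [hco, pow_succ] at hdvd
    have : (p : WittVector p k) ∣ 1 := by
      rw [← mul_dvd_mul_iff_left hpn0, mul_one]
      exact hdvd
    exact hirr.not_isUnit (isUnit_of_dvd_one this)
  obtain ⟨u, v, huv⟩ := Ideal.mem_span_pair.mp (hIJ hzI)
  have huv' : IsUnit u ∨ IsUnit v := by
    by_contra hcon
    push_neg at hcon
    exact hzK (huv ▸ (hlin u v).mpr ⟨hcon.1, hcon.2⟩)
  set a := PowerSeries.constantCoeff u with ha_def
  set b := PowerSeries.constantCoeff v with hb_def
  have hdiff : (u - PowerSeries.C a) * ((p : PowerSeries (WittVector p k)) ^ n * PowerSeries.X)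
      + (v - PowerSeries.C b) * PowerSeries.X ^ 2 ∈ Ideal.span
      {(p : PowerSeries (WittVector p k)) ^ (n + 1) * PowerSeries.X,
        (p : PowerSeries (WittVector p k)) * PowerSeries.X ^ 2, PowerSeries.X ^ 3} := by
    refine (hlin _ _).mpr ⟨?_, ?_⟩ <;>
      · rw [PowerSeries.isUnit_iff_constantCoeff]
        simp [ha_def, hb_def]
  have hgI : PowerSeries.C a * ((p : PowerSeries (WittVector p k)) ^ n * PowerSeries.X)
      + PowerSeries.C b * PowerSeries.X ^ 2 ∈ I := by
    have h : PowerSeries.C a * ((p : PowerSeries (WittVector p k)) ^ n * PowerSeries.X)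
        + PowerSeries.C b * PowerSeries.X ^ 2
        = z - ((u - PowerSeries.C a) * ((p : PowerSeries (WittVector p k)) ^ n * PowerSeries.X)
          + (v - PowerSeries.C b) * PowerSeries.X ^ 2) := by
      rw [← huv]; ring
    rw [h]
    exact Ideal.sub_mem _ hzI (hKI hdiff)
  have hab : IsUnit a ∨ IsUnit b := by
    rcases huv' with h | h
    · exact Or.inl (PowerSeries.isUnit_constantCoeff _ h)
    · exact Or.inr (PowerSeries.isUnit_constantCoeff _ h)
  refine ⟨hKI, ⟨a, b, hab, ?_⟩, ?_, hlin⟩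
  · -- I = span of four elements
    apply le_antisymm
    · intro z' hz'I
      obtain ⟨u', v', huv2⟩ := Ideal.mem_span_pair.mp (hIJ hz'I)
      have hKL : Ideal.span {(p : PowerSeries (WittVector p k)) ^ (n + 1) * PowerSeries.X,
            (p : PowerSeries (WittVector p k)) * PowerSeries.X ^ 2, PowerSeries.X ^ 3}
          ≤ Ideal.span {(p : PowerSeries (WittVector p k)) ^ (n + 1) * PowerSeries.X,
            (p : PowerSeries (WittVector p k)) * PowerSeries.X ^ 2, PowerSeries.X ^ 3,
            PowerSeries.C a *
                ((p : PowerSeries (WittVector p k)) ^ n * PowerSeries.X) +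
              PowerSeries.C b * PowerSeries.X ^ 2} := by
        apply Ideal.span_mono
        intro x hx
        simp only [Set.mem_insert_iff, Set.mem_singleton_iff] at hx ⊢
        exact hx.imp id (Or.imp id Or.inl)
      have hg4 : PowerSeries.C a *
            ((p : PowerSeries (WittVector p k)) ^ n * PowerSeries.X) +
          PowerSeries.C b * PowerSeries.X ^ 2
          ∈ Ideal.span {(p : PowerSeries (WittVector p k)) ^ (n + 1) * PowerSeries.X,
            (p : PowerSeries (WittVector p k)) * PowerSeries.X ^ 2, PowerSeries.X ^ 3,
            PowerSeries.C a *
                ((p : PowerSeries (WittVector p k)) ^ n * PowerSeries.X) +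
              PowerSeries.C b * PowerSeries.X ^ 2} :=
        Ideal.subset_span (by simp)
      rcases hab with hua | hub
      · obtain ⟨au, hau⟩ := hua
        have hinv : (PowerSeries.C ((↑au⁻¹ : WittVector p k)))
            * PowerSeries.C a = 1 := by
          rw [← map_mul, ← hau, Units.inv_mul, map_one]
        set c := u' * PowerSeries.C ((↑au⁻¹ : WittVector p k)) with hc_def
        have hkey : z' - c * (PowerSeries.C a *
              ((p : PowerSeries (WittVector p k)) ^ n * PowerSeries.X) +
            PowerSeries.C b * PowerSeries.X ^ 2)
            = (v' - c * PowerSeries.C b) * PowerSeries.X ^ 2 := by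
          rw [← huv2, hc_def]
          linear_combination (-u' * ((p : PowerSeries (WittVector p k)) ^ n * PowerSeries.X)) * hinv
        by_cases hw : IsUnit (v' - c * PowerSeries.C b)
        · exfalso
          obtain ⟨wu, hwu⟩ := hw
          have h1 : z' - c * (PowerSeries.C a *
                ((p : PowerSeries (WittVector p k)) ^ n * PowerSeries.X) +
              PowerSeries.C b * PowerSeries.X ^ 2) ∈ I :=
            Ideal.sub_mem _ hz'I (Ideal.mul_mem_left _ _ hgI)
          have hX2 : (PowerSeries.X : PowerSeries (WittVector p k)) ^ 2 ∈ I := by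
            have h2 : (PowerSeries.X : PowerSeries (WittVector p k)) ^ 2
                = (↑wu⁻¹ : PowerSeries (WittVector p k)) *
                  ((v' - c * PowerSeries.C b) * PowerSeries.X ^ 2) := by
              rw [← hwu, ← mul_assoc, Units.inv_mul, one_mul]
            rw [h2, ← hkey]
            exact Ideal.mul_mem_left _ _ h1
          have hpnX : (p : PowerSeries (WittVector p k)) ^ n * PowerSeries.X ∈ I := by
            have h3 : (p : PowerSeries (WittVector p k)) ^ n * PowerSeries.X
                = PowerSeries.C ((↑au⁻¹ : WittVector p k)) *
                  (PowerSeries.C a *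
                    ((p : PowerSeries (WittVector p k)) ^ n * PowerSeries.X) +
                  PowerSeries.C b * PowerSeries.X ^ 2)
                - PowerSeries.C ((↑au⁻¹ : WittVector p k)) *
                  PowerSeries.C b * PowerSeries.X ^ 2 := by
              linear_combination (-((p : PowerSeries (WittVector p k)) ^ n * PowerSeries.X)) * hinv
            rw [h3]
            exact Ideal.sub_mem _ (Ideal.mul_mem_left _ _ hgI) (Ideal.mul_mem_left _ _ hX2)
          exact hnotboth ⟨hpnX, hX2⟩
        · have hmem : (v' - c * PowerSeries.C b) * PowerSeries.X ^ 2
              ∈ Ideal.span {(p : PowerSeries (WittVector p k)) ^ (n + 1) * PowerSeries.X,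
                (p : PowerSeries (WittVector p k)) * PowerSeries.X ^ 2, PowerSeries.X ^ 3} := by
            have h4 := (hlin 0 (v' - c * PowerSeries.C b)).mpr
              ⟨not_isUnit_zero, hw⟩
            simpa using h4
          have h5 : z' = c * (PowerSeries.C a *
                ((p : PowerSeries (WittVector p k)) ^ n * PowerSeries.X) +
              PowerSeries.C b * PowerSeries.X ^ 2)
              + (z' - c * (PowerSeries.C a *
                ((p : PowerSeries (WittVector p k)) ^ n * PowerSeries.X) +
              PowerSeries.C b * PowerSeries.X ^ 2)) := by ring
          rw [h5]
          exact Ideal.add_mem _ (Ideal.mul_mem_left _ _ hg4) (hKL (hkey ▸ hmem))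
      · obtain ⟨bu, hbu⟩ := hub
        have hinv : (PowerSeries.C ((↑bu⁻¹ : WittVector p k)))
            * PowerSeries.C b = 1 := by
          rw [← map_mul, ← hbu, Units.inv_mul, map_one]
        set c := v' * PowerSeries.C ((↑bu⁻¹ : WittVector p k)) with hc_def
        have hkey : z' - c * (PowerSeries.C a *
              ((p : PowerSeries (WittVector p k)) ^ n * PowerSeries.X) +
            PowerSeries.C b * PowerSeries.X ^ 2)
            = (u' - c * PowerSeries.C a) *
              ((p : PowerSeries (WittVector p k)) ^ n * PowerSeries.X) := by
          rw [← huv2, hc_def]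
          linear_combination (-v' * (PowerSeries.X : PowerSeries (WittVector p k)) ^ 2) * hinv
        by_cases hw : IsUnit (u' - c * PowerSeries.C a)
        · exfalso
          obtain ⟨wu, hwu⟩ := hw
          have h1 : z' - c * (PowerSeries.C a *
                ((p : PowerSeries (WittVector p k)) ^ n * PowerSeries.X) +
              PowerSeries.C b * PowerSeries.X ^ 2) ∈ I :=
            Ideal.sub_mem _ hz'I (Ideal.mul_mem_left _ _ hgI)
          have hpnX : (p : PowerSeries (WittVector p k)) ^ n * PowerSeries.X ∈ I := by
            have h2 : (p : PowerSeries (WittVector p k)) ^ n * PowerSeries.X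
                = (↑wu⁻¹ : PowerSeries (WittVector p k)) *
                  ((u' - c * PowerSeries.C a) *
                    ((p : PowerSeries (WittVector p k)) ^ n * PowerSeries.X)) := by
              rw [← hwu, ← mul_assoc, Units.inv_mul, one_mul]
            rw [h2, ← hkey]
            exact Ideal.mul_mem_left _ _ h1
          have hX2 : (PowerSeries.X : PowerSeries (WittVector p k)) ^ 2 ∈ I := by
            have h3 : (PowerSeries.X : PowerSeries (WittVector p k)) ^ 2
                = PowerSeries.C ((↑bu⁻¹ : WittVector p k)) *
                  (PowerSeries.C a *
                    ((p : PowerSeries (WittVector p k)) ^ n * PowerSeries.X) +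
                  PowerSeries.C b * PowerSeries.X ^ 2)
                - PowerSeries.C ((↑bu⁻¹ : WittVector p k)) *
                  PowerSeries.C a *
                    ((p : PowerSeries (WittVector p k)) ^ n * PowerSeries.X) := by
              linear_combination (-((PowerSeries.X : PowerSeries (WittVector p k)) ^ 2)) * hinv
            rw [h3]
            exact Ideal.sub_mem _ (Ideal.mul_mem_left _ _ hgI) (Ideal.mul_mem_left _ _ hpnX)
          exact hnotboth ⟨hpnX, hX2⟩
        · have hmem : (u' - c * PowerSeries.C a) *
              ((p : PowerSeries (WittVector p k)) ^ n * PowerSeries.X)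
              ∈ Ideal.span {(p : PowerSeries (WittVector p k)) ^ (n + 1) * PowerSeries.X,
                (p : PowerSeries (WittVector p k)) * PowerSeries.X ^ 2, PowerSeries.X ^ 3} := by
            have h4 := (hlin (u' - c * PowerSeries.C a) 0).mpr
              ⟨hw, not_isUnit_zero⟩
            simpa using h4
          have h5 : z' = c * (PowerSeries.C a *
                ((p : PowerSeries (WittVector p k)) ^ n * PowerSeries.X) +
              PowerSeries.C b * PowerSeries.X ^ 2)
              + (z' - c * (PowerSeries.C a *
                ((p : PowerSeries (WittVector p k)) ^ n * PowerSeries.X) +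
              PowerSeries.C b * PowerSeries.X ^ 2)) := by ring
          rw [h5]
          exact Ideal.add_mem _ (Ideal.mul_mem_left _ _ hg4) (hKL (hkey ▸ hmem))
    · rw [Ideal.span_le]
      rintro g hg
      simp only [Set.mem_insert_iff, Set.mem_singleton_iff] at hg
      rcases hg with rfl | rfl | rfl | rfl
      · exact hKI (Ideal.subset_span (by simp))
      · exact hKI (Ideal.subset_span (by simp))
      · exact hKI (Ideal.subset_span (by simp))
      · exact hgI
  · -- spanning
    intro x hx
    obtain ⟨c, d, hcd⟩ := Ideal.mem_span_pair.mp hx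
    exact ⟨c, d, by rw [← hcd, sub_self]; exact Ideal.zero_mem _⟩
end

section
/- With notation as in the context, fix an injective homomorphism θ: ℤ/ℓ → k̄^× and an element a ∈ ℤ/ℓ such that (h − 1)a ≠ 0 in ℤ/ℓ for every h ∈ H with h ≠ 1 (so that Y_{θ^a} is irreducible). Then the k̄-dimension of Hom_{k̄G}(Y_{θ^a}, End_{k̄}(Y_θ)) equals the number of ordered pairs (h₂, h₃) ∈ H × H with h₃ − h₂ = a in ℤ/ℓ; in particular, Y_{θ^a} occurs with multiplicity one in End_{k̄}(Y_θ) if and only if there is exactly one such pair. -/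
open SemidirectProduct

/-- Conversion from additive automorphisms of `M` to multiplicative automorphisms of
`Multiplicative M`. -/
def addAutToMulAut (M : Type) [AddGroup M] : Multiplicative (AddAut M) →* MulAut (Multiplicative M) where
  toFun e := AddEquiv.toMultiplicative (Multiplicative.toAdd e)
  map_one' := rfl
  map_mul' _ _ := rfl

/-- The semidirect product `G = (ℤ/ℓ) ⋊_ν (ℤ/q)`, where `s ∈ ℤ/q` acts on `ℤ/ℓ` by
multiplication by the unit `ν(s)`. -/
abbrev Gsd (q ℓ : ℕ) (ν : Multiplicative (ZMod q) →* (ZMod ℓ)ˣ) : Type :=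
  Multiplicative (ZMod ℓ) ⋊[(addAutToMulAut (ZMod ℓ)).comp (AddAut.mulLeft.comp ν)]
    Multiplicative (ZMod q)

/-- The generator `τ` of the subgroup `ℤ/ℓ` of `G`. -/
abbrev tauG (q ℓ : ℕ) (ν : Multiplicative (ZMod q) →* (ZMod ℓ)ˣ) : Gsd q ℓ ν :=
  SemidirectProduct.inl (Multiplicative.ofAdd (1 : ZMod ℓ))

/-- The generator `σ` of the subgroup `ℤ/q` of `G`. -/
abbrev sigmaG (q ℓ : ℕ) (ν : Multiplicative (ZMod q) →* (ZMod ℓ)ˣ) : Gsd q ℓ ν :=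
  SemidirectProduct.inr (Multiplicative.ofAdd (1 : ZMod q))

/-- `ρ` (with basis `w`) is the representation `Y_λ` of `G = (ℤ/ℓ) ⋊_ν (ℤ/q)`:
`σ·w_s = w_{s+1}` and `τ·w_s = λ(τ)^{ν(s)⁻¹}·w_s`. -/
def IsYRep (q ℓ : ℕ) {kbar : Type} [Field kbar]
    (ν : Multiplicative (ZMod q) →* (ZMod ℓ)ˣ)
    (lam : Multiplicative (ZMod ℓ) →* kbarˣ)
    {Y : Type} [AddCommGroup Y] [Module kbar Y]
    (ρ : Representation kbar (Gsd q ℓ ν) Y) (w : Module.Basis (ZMod q) kbar Y) : Prop :=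
  (∀ s : ZMod q, ρ (sigmaG q ℓ ν) (w s) = w (s + 1)) ∧
  (∀ s : ZMod q, ρ (tauG q ℓ ν) (w s) =
    (((lam (Multiplicative.ofAdd (1 : ZMod ℓ)) : kbarˣ) : kbar) ^
      ((((ν (Multiplicative.ofAdd s))⁻¹ : (ZMod ℓ)ˣ) : ZMod ℓ).val)) • w s)

/-- The homomorphism `θ^a : x ↦ θ(x)^a` for `a : ℤ/ℓ` (well defined on `ℓ`-th roots of
unity via `a.val`). -/
def powHom {kbar : Type} [Field kbar] {ℓ : ℕ} (θ : Multiplicative (ZMod ℓ) →* kbarˣ)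
    (a : ZMod ℓ) : Multiplicative (ZMod ℓ) →* kbarˣ where
  toFun x := θ x ^ a.val
  map_one' := by simp
  map_mul' x y := by simp [mul_pow]

/-- The space `Hom_{k̄G}(M₁, M₂)` of `G`-equivariant `k̄`-linear maps between two
representations. -/
def repHoms {kbar : Type} [Field kbar] {G : Type} [Group G] {M₁ M₂ : Type}
    [AddCommGroup M₁] [Module kbar M₁] [AddCommGroup M₂] [Module kbar M₂]
    (ρ₁ : Representation kbar G M₁) (ρ₂ : Representation kbar G M₂) :
    Submodule kbar (M₁ →ₗ[kbar] M₂) where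
  carrier := {f | ∀ g : G, f ∘ₗ ρ₁ g = ρ₂ g ∘ₗ f}
  add_mem' := by
    intro a b ha hb g
    simp only [LinearMap.add_comp, LinearMap.comp_add, ha g, hb g]
  zero_mem' := by intro g; simp
  smul_mem' := by
    intro c f hf g
    simp only [LinearMap.smul_comp, LinearMap.comp_smul, hf g]

open Multiplicative SemidirectProduct

section Aux
variable {q ℓ : ℕ} {kbar : Type} [Field kbar]

lemma ofAdd_one_pow {n : ℕ} [NeZero n] (m : ZMod n) :
    (Multiplicative.ofAdd (1 : ZMod n)) ^ m.val = Multiplicative.ofAdd m := by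
  rw [← ofAdd_nsmul]
  congr 1
  simp [nsmul_eq_mul, ZMod.natCast_val, ZMod.cast_id]

lemma hom_ofAdd_pow [NeZero ℓ] (lam : Multiplicative (ZMod ℓ) →* kbarˣ) (x m : ZMod ℓ) :
    lam (ofAdd x) ^ m.val = lam (ofAdd (m * x)) := by
  rw [← map_pow, ← ofAdd_nsmul]
  congr 2
  simp [nsmul_eq_mul, ZMod.natCast_val, ZMod.cast_id]

variable (ν : Multiplicative (ZMod q) →* (ZMod ℓ)ˣ)

/-- `ν(u)⁻¹` as an element of `ZMod ℓ`. -/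
def hInv (u : ZMod q) : ZMod ℓ := (((ν (Multiplicative.ofAdd u))⁻¹ : (ZMod ℓ)ˣ) : ZMod ℓ)

lemma tau_pow [NeZero ℓ] (m : ZMod ℓ) :
    (tauG q ℓ ν) ^ m.val = SemidirectProduct.inl (Multiplicative.ofAdd m) := by
  rw [tauG, ← map_pow, ofAdd_one_pow]

lemma sigma_pow [NeZero q] (s : ZMod q) :
    (sigmaG q ℓ ν) ^ s.val = SemidirectProduct.inr (Multiplicative.ofAdd s) := by
  rw [sigmaG, ← map_pow, ofAdd_one_pow]

lemma inl_mul_inr (m : ZMod ℓ) (x : Multiplicative (ZMod q)) :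
    (SemidirectProduct.inl (ofAdd m) : Gsd q ℓ ν) * SemidirectProduct.inr x =
      SemidirectProduct.inr x *
        SemidirectProduct.inl (ofAdd ((((ν x)⁻¹ : (ZMod ℓ)ˣ) : ZMod ℓ) * m)) := by
  have h := SemidirectProduct.inl_aut (φ := (addAutToMulAut (ZMod ℓ)).comp (AddAut.mulLeft.comp ν))
    x (ofAdd ((((ν x)⁻¹ : (ZMod ℓ)ˣ) : ZMod ℓ) * m))
  have h2 : ((addAutToMulAut (ZMod ℓ)).comp (AddAut.mulLeft.comp ν)) x
      (ofAdd ((((ν x)⁻¹ : (ZMod ℓ)ˣ) : ZMod ℓ) * m)) = ofAdd m := by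
    show ofAdd (((ν x : (ZMod ℓ)ˣ) : ZMod ℓ) * ((((ν x)⁻¹ : (ZMod ℓ)ˣ) : ZMod ℓ) * m)) = ofAdd m
    rw [← mul_assoc, ← Units.val_mul, mul_inv_cancel, Units.val_one, one_mul]
  rw [h2] at h
  rw [h, mul_assoc, ← map_mul, inv_mul_cancel, map_one, mul_one]

lemma rep_pow_smul {G M : Type} [Monoid G] [AddCommGroup M] [Module kbar M]
    (ρ : Representation kbar G M) (g : G) (x : M) (c : kbar) (h : ρ g x = c • x) (n : ℕ) :
    ρ (g ^ n) x = c ^ n • x := by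
  induction n with
  | zero => simp
  | succ n ih =>
    rw [pow_succ, map_mul]
    simp only [Module.End.mul_apply, h, map_smul, ih, pow_succ, mul_smul]
    rw [smul_comm]

end Aux
section Rep
open Multiplicative SemidirectProduct
variable {q ℓ : ℕ} {kbar : Type} [Field kbar]
variable {ν : Multiplicative (ZMod q) →* (ZMod ℓ)ˣ}
variable (lam : Multiplicative (ZMod ℓ) →* kbarˣ)
variable {Y : Type} [AddCommGroup Y] [Module kbar Y]
variable (ρ : Representation kbar (Gsd q ℓ ν) Y) (w : Module.Basis (ZMod q) kbar Y)

lemma rho_tau [NeZero ℓ] (hY : IsYRep q ℓ ν lam ρ w) (u : ZMod q) :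
    ρ (tauG q ℓ ν) (w u) = ((lam (ofAdd (hInv ν u)) : kbarˣ) : kbar) • w u := by
  rw [hY.2 u, ← Units.val_pow_eq_pow_val, hom_ofAdd_pow lam 1, mul_one]
  rfl

lemma rho_inl [NeZero ℓ] (hY : IsYRep q ℓ ν lam ρ w) (m : ZMod ℓ) (u : ZMod q) :
    ρ (SemidirectProduct.inl (ofAdd m)) (w u) =
      ((lam (ofAdd (m * hInv ν u)) : kbarˣ) : kbar) • w u := by
  rw [← tau_pow ν m, rep_pow_smul ρ _ _ _ (rho_tau lam ρ w hY u) m.val,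
    ← Units.val_pow_eq_pow_val, hom_ofAdd_pow]

lemma rho_inr [NeZero q] (hY : IsYRep q ℓ ν lam ρ w) (s u : ZMod q) :
    ρ (SemidirectProduct.inr (ofAdd s)) (w u) = w (u + s) := by
  rw [← sigma_pow ν s]
  have key : ∀ (n : ℕ) (u : ZMod q), ρ ((sigmaG q ℓ ν) ^ n) (w u) = w (u + n) := by
    intro n
    induction n with
    | zero => intro u; simp
    | succ n ih =>
      intro u
      rw [pow_succ', map_mul, Module.End.mul_apply, ih, hY.1]
      push_cast
      ring_nf
  rw [key s.val u, ZMod.natCast_val, ZMod.cast_id]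

end Rep
section Main
open Multiplicative SemidirectProduct
variable {q ℓ : ℕ} {kbar : Type} [Field kbar]
variable {ν : Multiplicative (ZMod q) →* (ZMod ℓ)ˣ}
variable (θ : Multiplicative (ZMod ℓ) →* kbarˣ) (a : ZMod ℓ)
variable {Y : Type} [AddCommGroup Y] [Module kbar Y]
variable (w : Module.Basis (ZMod q) kbar Y)

@[simp] lemma powHom_apply (x : Multiplicative (ZMod ℓ)) : powHom θ a x = θ x ^ a.val := rfl

lemma powHom_ofAdd [NeZero ℓ] (x : ZMod ℓ) :
    powHom θ a (ofAdd x) = θ (ofAdd (a * x)) := by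
  rw [powHom_apply, hom_ofAdd_pow]

lemma tau_inv : (tauG q ℓ ν)⁻¹ = SemidirectProduct.inl (ofAdd (-1 : ZMod ℓ)) := by
  rw [← map_inv, ← ofAdd_neg]

/-- The matrix unit `E_{s,t}` relative to the basis `w`. -/
noncomputable def Emap (s t : ZMod q) : Y →ₗ[kbar] Y :=
  (LinearMap.toSpanSingleton kbar Y (w s)).comp (w.coord t)

lemma Emap_apply (s t : ZMod q) (y : Y) : Emap w s t y = (w.repr y t) • w s := rfl

variable (ρ : Representation kbar (Gsd q ℓ ν) Y)

lemma repr_rho_inl [NeZero ℓ] (hY : IsYRep q ℓ ν θ ρ w) (m : ZMod ℓ) (y : Y) (t : ZMod q) :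
    w.repr (ρ (SemidirectProduct.inl (ofAdd m)) y) t =
      ((θ (ofAdd (m * hInv ν t)) : kbarˣ) : kbar) * w.repr y t := by
  have key : (w.coord t) ∘ₗ (ρ (SemidirectProduct.inl (ofAdd m))) =
      (((θ (ofAdd (m * hInv ν t)) : kbarˣ) : kbar)) • w.coord t := by
    refine Module.Basis.ext w fun u => ?_
    simp only [LinearMap.comp_apply, LinearMap.smul_apply, rho_inl θ ρ w hY m u, map_smul,
      Module.Basis.coord_apply, Module.Basis.repr_self, Finsupp.smul_single, Finsupp.single_apply,
      smul_eq_mul, mul_one]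
    by_cases h : u = t
    · subst h; simp
    · simp [h]
  have := congrArg (fun f => f y) key
  simpa [Module.Basis.coord_apply] using this

lemma tau_conj_Emap [NeZero ℓ] (hY : IsYRep q ℓ ν θ ρ w) {s t : ZMod q}
    (hP : hInv ν s - hInv ν t = a) :
    (Representation.linHom ρ ρ) (tauG q ℓ ν) (Emap w s t) =
      ((θ (ofAdd a) : kbarˣ) : kbar) • Emap w s t := by
  ext y
  rw [Representation.linHom_apply]
  simp only [LinearMap.comp_apply, LinearMap.smul_apply, Emap_apply, tau_inv]
  rw [repr_rho_inl θ w ρ hY (-1) y t, map_smul, rho_tau θ ρ w hY s, smul_smul, smul_smul]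
  congr 1
  rw [mul_right_comm, mul_comm ((θ (ofAdd (-1 * hInv ν t)) : kbarˣ) : kbar), ← Units.val_mul,
    ← map_mul, ← ofAdd_add]
  congr 3
  rw [← hP]; ring_nf

end Main
section Main2
open Multiplicative SemidirectProduct
variable {q ℓ : ℕ} {kbar : Type} [Field kbar]
variable {ν : Multiplicative (ZMod q) →* (ZMod ℓ)ˣ}
variable (θ : Multiplicative (ZMod ℓ) →* kbarˣ) (a : ZMod ℓ)
variable {Y : Type} [AddCommGroup Y] [Module kbar Y]
variable (ρ : Representation kbar (Gsd q ℓ ν) Y) (w : Module.Basis (ZMod q) kbar Y)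
variable {Ya : Type} [AddCommGroup Ya] [Module kbar Ya]
variable (ρa : Representation kbar (Gsd q ℓ ν) Ya) (wa : Module.Basis (ZMod q) kbar Ya)

lemma linHom_inl_smul [NeZero ℓ] (A : Y →ₗ[kbar] Y)
    (hA : (Representation.linHom ρ ρ) (tauG q ℓ ν) A = ((θ (ofAdd a) : kbarˣ) : kbar) • A)
    (m : ZMod ℓ) :
    (Representation.linHom ρ ρ) (SemidirectProduct.inl (ofAdd m)) A =
      ((θ (ofAdd (a * m)) : kbarˣ) : kbar) • A := by
  rw [← tau_pow ν m, rep_pow_smul (Representation.linHom ρ ρ) _ _ _ hA m.val,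
    ← Units.val_pow_eq_pow_val, hom_ofAdd_pow, mul_comm]

/-- The candidate equivariant map determined by `A`. -/
noncomputable def Fmap (A : Y →ₗ[kbar] Y) : Ya →ₗ[kbar] (Y →ₗ[kbar] Y) :=
  wa.constr kbar (fun u => (Representation.linHom ρ ρ) (SemidirectProduct.inr (ofAdd u)) A)

lemma Fmap_apply (A : Y →ₗ[kbar] Y) (u : ZMod q) :
    Fmap ρ wa A (wa u) = (Representation.linHom ρ ρ) (SemidirectProduct.inr (ofAdd u)) A :=
  Module.Basis.constr_basis wa kbar _ u

lemma Fmap_mem [NeZero ℓ] [NeZero q] (hYa : IsYRep q ℓ ν (powHom θ a) ρa wa)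
    (A : Y →ₗ[kbar] Y)
    (hA : (Representation.linHom ρ ρ) (tauG q ℓ ν) A = ((θ (ofAdd a) : kbarˣ) : kbar) • A) :
    Fmap ρ wa A ∈ repHoms ρa (Representation.linHom ρ ρ) := by
  have hsig : Fmap ρ wa A ∘ₗ ρa (sigmaG q ℓ ν) =
      (Representation.linHom ρ ρ) (sigmaG q ℓ ν) ∘ₗ Fmap ρ wa A := by
    refine Module.Basis.ext wa fun u => ?_
    rw [LinearMap.comp_apply, LinearMap.comp_apply, hYa.1 u, Fmap_apply, Fmap_apply,
      ← Module.End.mul_apply, ← map_mul, ← map_mul, ← ofAdd_add, add_comm]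
  have htau : Fmap ρ wa A ∘ₗ ρa (tauG q ℓ ν) =
      (Representation.linHom ρ ρ) (tauG q ℓ ν) ∘ₗ Fmap ρ wa A := by
    refine Module.Basis.ext wa fun u => ?_
    rw [LinearMap.comp_apply, LinearMap.comp_apply, rho_tau (powHom θ a) ρa wa hYa u,
      powHom_ofAdd, map_smul, Fmap_apply]
    have hcomm : (tauG q ℓ ν) * SemidirectProduct.inr (ofAdd u) =
        SemidirectProduct.inr (ofAdd u) * SemidirectProduct.inl (ofAdd (hInv ν u)) := by
      have := inl_mul_inr ν (1 : ZMod ℓ) (ofAdd u)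
      rwa [mul_one] at this
    rw [← Module.End.mul_apply ((Representation.linHom ρ ρ) (tauG q ℓ ν)),
      ← map_mul (Representation.linHom ρ ρ), hcomm, map_mul (Representation.linHom ρ ρ),
      Module.End.mul_apply, linHom_inl_smul θ a ρ A hA (hInv ν u), map_smul]
  have hone : Fmap ρ wa A ∘ₗ ρa 1 = (Representation.linHom ρ ρ) 1 ∘ₗ Fmap ρ wa A := by
    simp [Module.End.one_eq_id]
  have hmul : ∀ g g' : Gsd q ℓ ν,
      (Fmap ρ wa A ∘ₗ ρa g = (Representation.linHom ρ ρ) g ∘ₗ Fmap ρ wa A) →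
      (Fmap ρ wa A ∘ₗ ρa g' = (Representation.linHom ρ ρ) g' ∘ₗ Fmap ρ wa A) →
      Fmap ρ wa A ∘ₗ ρa (g * g') = (Representation.linHom ρ ρ) (g * g') ∘ₗ Fmap ρ wa A := by
    intro g g' hg hg'
    rw [map_mul, map_mul, Module.End.mul_eq_comp, Module.End.mul_eq_comp, ← LinearMap.comp_assoc,
      hg, LinearMap.comp_assoc, hg', ← LinearMap.comp_assoc]
  have hpow : ∀ (g : Gsd q ℓ ν) (n : ℕ),
      (Fmap ρ wa A ∘ₗ ρa g = (Representation.linHom ρ ρ) g ∘ₗ Fmap ρ wa A) →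
      Fmap ρ wa A ∘ₗ ρa (g ^ n) = (Representation.linHom ρ ρ) (g ^ n) ∘ₗ Fmap ρ wa A := by
    intro g n hg
    induction n with
    | zero => simpa using hone
    | succ n ih => rw [pow_succ]; exact hmul _ _ ih hg
  intro g
  rw [← SemidirectProduct.inl_left_mul_inr_right g]
  refine hmul _ _ ?_ ?_
  · have h1 : (SemidirectProduct.inl g.left : Gsd q ℓ ν) =
        (tauG q ℓ ν) ^ (Multiplicative.toAdd g.left).val := by
      rw [tau_pow]
      rfl
    rw [h1]; exact hpow _ _ htau
  · have h1 : (SemidirectProduct.inr g.right : Gsd q ℓ ν) =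
        (sigmaG q ℓ ν) ^ (Multiplicative.toAdd g.right).val := by
      rw [sigma_pow]
      rfl
    rw [h1]; exact hpow _ _ hsig

end Main2
section Main3
open Multiplicative SemidirectProduct
variable {q ℓ : ℕ} {kbar : Type} [Field kbar]
variable {ν : Multiplicative (ZMod q) →* (ZMod ℓ)ˣ}
variable (θ : Multiplicative (ZMod ℓ) →* kbarˣ) (a : ZMod ℓ)
variable {Y : Type} [AddCommGroup Y] [Module kbar Y]
variable (ρ : Representation kbar (Gsd q ℓ ν) Y) (w : Module.Basis (ZMod q) kbar Y)
variable {Ya : Type} [AddCommGroup Ya] [Module kbar Ya]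
variable (ρa : Representation kbar (Gsd q ℓ ν) Ya) (wa : Module.Basis (ZMod q) kbar Ya)

/-- The coordinate map on equivariant homs. -/
noncomputable def Phi :
    (repHoms ρa (Representation.linHom ρ ρ)) →ₗ[kbar]
      ({st : ZMod q × ZMod q // hInv ν st.1 - hInv ν st.2 = a} → kbar) where
  toFun F := fun st => w.repr (((F : Ya →ₗ[kbar] Y →ₗ[kbar] Y) (wa 0)) (w st.1.2)) st.1.1
  map_add' F G := by funext st; simp
  map_smul' c F := by funext st; simp

lemma mem_repHoms_apply {F : Ya →ₗ[kbar] Y →ₗ[kbar] Y}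
    (hF : F ∈ repHoms ρa (Representation.linHom ρ ρ)) (g : Gsd q ℓ ν) (y : Ya) :
    F (ρa g y) = (Representation.linHom ρ ρ) g (F y) := by
  have := congrArg (fun f => f y) (hF g)
  simpa using this

lemma mem_apply_wa [NeZero ℓ] [NeZero q] (hYa : IsYRep q ℓ ν (powHom θ a) ρa wa)
    {F : Ya →ₗ[kbar] Y →ₗ[kbar] Y}
    (hF : F ∈ repHoms ρa (Representation.linHom ρ ρ)) (u : ZMod q) :
    F (wa u) = (Representation.linHom ρ ρ) (SemidirectProduct.inr (ofAdd u)) (F (wa 0)) := by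
  have h0 : ρa (SemidirectProduct.inr (ofAdd u)) (wa 0) = wa u := by
    rw [rho_inr (powHom θ a) ρa wa hYa, zero_add]
  rw [← h0, mem_repHoms_apply ρ ρa hF]

lemma hInv_zero [NeZero ℓ] : hInv ν (0 : ZMod q) = 1 := by
  unfold hInv
  rw [show ofAdd (0 : ZMod q) = 1 from rfl, map_one, inv_one, Units.val_one]

lemma tau_smul_wa0 [NeZero ℓ] [NeZero q] (hYa : IsYRep q ℓ ν (powHom θ a) ρa wa) :
    ρa (tauG q ℓ ν) (wa 0) = ((θ (ofAdd a) : kbarˣ) : kbar) • wa 0 := by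
  rw [rho_tau (powHom θ a) ρa wa hYa 0, hInv_zero, powHom_ofAdd, mul_one]

lemma offdiag_zero [NeZero ℓ] [NeZero q] (hθ : Function.Injective θ)
    (hY : IsYRep q ℓ ν θ ρ w) (hYa : IsYRep q ℓ ν (powHom θ a) ρa wa)
    {F : Ya →ₗ[kbar] Y →ₗ[kbar] Y}
    (hF : F ∈ repHoms ρa (Representation.linHom ρ ρ)) {s t : ZMod q}
    (hP : ¬ (hInv ν s - hInv ν t = a)) :
    w.repr ((F (wa 0)) (w t)) s = 0 := by
  have h1 : ((θ (ofAdd a) : kbarˣ) : kbar) • F (wa 0) =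
      (Representation.linHom ρ ρ) (tauG q ℓ ν) (F (wa 0)) := by
    rw [← mem_repHoms_apply ρ ρa hF, tau_smul_wa0 θ a ρa wa hYa, map_smul]
  rw [Representation.linHom_apply] at h1
  have h2 := congrArg (fun B => w.repr ((B : Y →ₗ[kbar] Y) (w t)) s) h1
  simp only [LinearMap.smul_apply, Finsupp.smul_apply, smul_eq_mul,
    LinearMap.comp_apply] at h2
  rw [tau_inv, rho_inl θ ρ w hY (-1) t, map_smul, map_smul, Finsupp.smul_apply,
    repr_rho_inl θ w ρ hY 1 _ s, smul_eq_mul] at h2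
  by_contra hm
  rw [map_smul, Finsupp.smul_apply, smul_eq_mul, ← mul_assoc] at h2
  have h2' := mul_right_cancel₀ hm h2
  have h3 : θ (ofAdd a) = θ (ofAdd (1 * hInv ν s)) * θ (ofAdd (-1 * hInv ν t)) :=
    Units.ext (by rw [Units.val_mul]; exact h2')
  rw [← map_mul, ← ofAdd_add] at h3
  have h4 := Multiplicative.ofAdd.injective (hθ h3)
  apply hP
  rw [h4]; ring

end Main3
section Main4
open Multiplicative SemidirectProduct
variable {q ℓ : ℕ} {kbar : Type} [Field kbar]
variable {ν : Multiplicative (ZMod q) →* (ZMod ℓ)ˣ}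
variable (θ : Multiplicative (ZMod ℓ) →* kbarˣ) (a : ZMod ℓ)
variable {Y : Type} [AddCommGroup Y] [Module kbar Y]
variable (ρ : Representation kbar (Gsd q ℓ ν) Y) (w : Module.Basis (ZMod q) kbar Y)
variable {Ya : Type} [AddCommGroup Ya] [Module kbar Ya]
variable (ρa : Representation kbar (Gsd q ℓ ν) Ya) (wa : Module.Basis (ZMod q) kbar Ya)

lemma Phi_injective [NeZero ℓ] [NeZero q] (hθ : Function.Injective θ)
    (hY : IsYRep q ℓ ν θ ρ w) (hYa : IsYRep q ℓ ν (powHom θ a) ρa wa) :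
    Function.Injective (Phi a ρ w ρa wa) := by
  intro F G h
  have hB : (F : Ya →ₗ[kbar] Y →ₗ[kbar] Y) (wa 0) =
      (G : Ya →ₗ[kbar] Y →ₗ[kbar] Y) (wa 0) := by
    refine Module.Basis.ext w fun t => ?_
    apply w.repr.injective
    refine Finsupp.ext fun s => ?_
    by_cases hst : hInv ν s - hInv ν t = a
    · exact congrFun h ⟨(s, t), hst⟩
    · rw [offdiag_zero θ a ρ w ρa wa hθ hY hYa F.2 hst,
        offdiag_zero θ a ρ w ρa wa hθ hY hYa G.2 hst]
  refine Subtype.ext (Module.Basis.ext wa fun u => ?_)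
  rw [mem_apply_wa θ a ρ ρa wa hYa F.2, mem_apply_wa θ a ρ ρa wa hYa G.2, hB]

lemma Phi_surjective [NeZero ℓ] [NeZero q]
    (hY : IsYRep q ℓ ν θ ρ w) (hYa : IsYRep q ℓ ν (powHom θ a) ρa wa) :
    Function.Surjective (Phi a ρ w ρa wa) := by
  intro f
  set A : Y →ₗ[kbar] Y :=
    ∑ st : {st : ZMod q × ZMod q // hInv ν st.1 - hInv ν st.2 = a},
      f st • Emap w st.1.1 st.1.2 with hAdef
  have hA : (Representation.linHom ρ ρ) (tauG q ℓ ν) A = ((θ (ofAdd a) : kbarˣ) : kbar) • A := by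
    rw [hAdef, map_sum, Finset.smul_sum]
    refine Finset.sum_congr rfl fun st _ => ?_
    rw [map_smul, tau_conj_Emap θ a w ρ hY st.2, smul_comm]
  refine ⟨⟨Fmap ρ wa A, Fmap_mem θ a ρ ρa wa hYa A hA⟩, ?_⟩
  funext st
  show w.repr ((Fmap ρ wa A (wa 0)) (w st.1.2)) st.1.1 = f st
  have h0 : Fmap ρ wa A (wa 0) = A := by
    rw [Fmap_apply, show SemidirectProduct.inr (ofAdd (0 : ZMod q)) = (1 : Gsd q ℓ ν) from
      map_one SemidirectProduct.inr, map_one, Module.End.one_apply]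
  rw [h0, hAdef, LinearMap.sum_apply, map_sum, Finsupp.finset_sum_apply]
  rw [Finset.sum_eq_single st]
  · simp [Emap_apply, Module.Basis.repr_self, Finsupp.single_apply]
  · intro st' _ hne
    have hne' : st'.1.1 ≠ st.1.1 ∨ st'.1.2 ≠ st.1.2 := by
      by_contra hc
      push_neg at hc
      exact hne (Subtype.ext (Prod.ext hc.1 hc.2))
    rcases hne' with hd | hd
    · simp only [Emap_apply, Module.Basis.repr_self, Finsupp.single_apply, map_smul, LinearMap.smul_apply]
      split_ifs with hcond
      · simp [Module.Basis.repr_self, Finsupp.single_apply, hd]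
      · simp
    · simp only [Emap_apply, Module.Basis.repr_self, Finsupp.single_apply, map_smul, LinearMap.smul_apply]
      rw [if_neg fun hc => hd hc.symm]
      simp
  · intro hst
    exact absurd (Finset.mem_univ st) hst

lemma finrank_repHoms [NeZero ℓ] [NeZero q] (hθ : Function.Injective θ)
    (hY : IsYRep q ℓ ν θ ρ w) (hYa : IsYRep q ℓ ν (powHom θ a) ρa wa) :
    Module.finrank kbar (repHoms ρa (Representation.linHom ρ ρ)) =
      Nat.card {st : ZMod q × ZMod q // hInv ν st.1 - hInv ν st.2 = a} := by
  have e := LinearEquiv.ofBijective (Phi a ρ w ρa wa)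
    ⟨Phi_injective θ a ρ w ρa wa hθ hY hYa, Phi_surjective θ a ρ w ρa wa hY hYa⟩
  rw [e.finrank_eq, Module.finrank_fintype_fun_eq_card, Nat.card_eq_fintype_card]

end Main4
section Main5
open Multiplicative SemidirectProduct
variable {q ℓ : ℕ} {kbar : Type} [Field kbar]
variable {ν : Multiplicative (ZMod q) →* (ZMod ℓ)ˣ} (a : ZMod ℓ)

lemma card_pairs_eq (hν : Function.Injective ν) :
    Nat.card {st : ZMod q × ZMod q // hInv ν st.1 - hInv ν st.2 = a} =
      Nat.card {hh : ↥ν.range × ↥ν.range //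
        ((hh.2 : (ZMod ℓ)ˣ) : ZMod ℓ) - ((hh.1 : (ZMod ℓ)ˣ) : ZMod ℓ) = a} := by
  refine Nat.card_eq_of_bijective
    (fun st => ⟨(⟨(ν (ofAdd st.1.2))⁻¹, inv_mem (MonoidHom.mem_range.2 ⟨_, rfl⟩)⟩,
      ⟨(ν (ofAdd st.1.1))⁻¹, inv_mem (MonoidHom.mem_range.2 ⟨_, rfl⟩)⟩), st.2⟩) ⟨?_, ?_⟩
  · intro st st' hst
    have h1 := congrArg (fun x => ((x.1.1 : (ZMod ℓ)ˣ), (x.1.2 : (ZMod ℓ)ˣ))) hst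
    simp only [Prod.mk.injEq] at h1
    have h2 : st.1.2 = st'.1.2 := by
      have := inv_injective h1.1
      simpa using hν this
    have h3 : st.1.1 = st'.1.1 := by
      have := inv_injective h1.2
      simpa using hν this
    exact Subtype.ext (Prod.ext h3 h2)
  · rintro ⟨⟨⟨h₂, m₂⟩, ⟨h₃, m₃⟩⟩, hc⟩
    obtain ⟨y₂, hy₂⟩ := MonoidHom.mem_range.1 (inv_mem m₂)
    obtain ⟨y₃, hy₃⟩ := MonoidHom.mem_range.1 (inv_mem m₃)
    refine ⟨⟨(Multiplicative.toAdd y₃, Multiplicative.toAdd y₂), ?_⟩, ?_⟩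
    · show hInv ν (Multiplicative.toAdd y₃) - hInv ν (Multiplicative.toAdd y₂) = a
      unfold hInv
      rw [show ofAdd (Multiplicative.toAdd y₃) = y₃ from rfl,
        show ofAdd (Multiplicative.toAdd y₂) = y₂ from rfl, hy₂, hy₃, inv_inv, inv_inv]
      exact hc
    · apply Subtype.ext
      apply Prod.ext
      · apply Subtype.ext
        show (ν (ofAdd (Multiplicative.toAdd y₂)))⁻¹ = h₂
        rw [show ofAdd (Multiplicative.toAdd y₂) = y₂ from rfl, hy₂, inv_inv]
      · apply Subtype.ext
        show (ν (ofAdd (Multiplicative.toAdd y₃)))⁻¹ = h₃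
        rw [show ofAdd (Multiplicative.toAdd y₃) = y₃ from rfl, hy₃, inv_inv]

end Main5
/-- If `(h−1)a ≠ 0` for all `1 ≠ h ∈ H`, then the `k̄`-dimension of
`Hom_{k̄G}(Y_{θ^a}, End_{k̄}(Y_θ))` is the number of ordered pairs `(h₂, h₃) ∈ H × H` with
`h₃ − h₂ = a`; in particular the multiplicity is one iff there is exactly one such pair. -/
theorem dim_homs_to_endo (p q ℓ : ℕ) (hp : p.Prime) (hq : 1 < q) (hℓ : 1 < ℓ)
    (hqp : Nat.Coprime q p) (hℓp : Nat.Coprime ℓ p)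
    (kbar : Type) [Field kbar] [IsAlgClosed kbar] [CharP kbar p]
    (ν : Multiplicative (ZMod q) →* (ZMod ℓ)ˣ) (hν : Function.Injective ν)
    (θ : Multiplicative (ZMod ℓ) →* kbarˣ) (hθ : Function.Injective θ)
    (a : ZMod ℓ)
    (ha : ∀ h : (ZMod ℓ)ˣ, h ∈ ν.range → h ≠ 1 → ((h : ZMod ℓ) - 1) * a ≠ 0)
    (Y : Type) [AddCommGroup Y] [Module kbar Y]
    (ρ : Representation kbar (Gsd q ℓ ν) Y) (w : Module.Basis (ZMod q) kbar Y)
    (hY : IsYRep q ℓ ν θ ρ w)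
    (Ya : Type) [AddCommGroup Ya] [Module kbar Ya]
    (ρa : Representation kbar (Gsd q ℓ ν) Ya) (wa : Module.Basis (ZMod q) kbar Ya)
    (hYa : IsYRep q ℓ ν (powHom θ a) ρa wa) :
    Module.finrank kbar ↥(repHoms ρa (Representation.linHom ρ ρ)) =
      Nat.card {hh : ↥ν.range × ↥ν.range //
        ((hh.2 : (ZMod ℓ)ˣ) : ZMod ℓ) - ((hh.1 : (ZMod ℓ)ˣ) : ZMod ℓ) = a} ∧
    (Module.finrank kbar ↥(repHoms ρa (Representation.linHom ρ ρ)) = 1 ↔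
      ∃! hh : ↥ν.range × ↥ν.range,
        ((hh.2 : (ZMod ℓ)ˣ) : ZMod ℓ) - ((hh.1 : (ZMod ℓ)ˣ) : ZMod ℓ) = a) := by
  haveI : NeZero ℓ := ⟨by omega⟩
  haveI : NeZero q := ⟨by omega⟩
  have h1 : Module.finrank kbar ↥(repHoms ρa (Representation.linHom ρ ρ)) =
      Nat.card {hh : ↥ν.range × ↥ν.range //
        ((hh.2 : (ZMod ℓ)ˣ) : ZMod ℓ) - ((hh.1 : (ZMod ℓ)ˣ) : ZMod ℓ) = a} := by
    rw [finrank_repHoms θ a ρ w ρa wa hθ hY hYa, card_pairs_eq a hν]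
  refine ⟨h1, ?_⟩
  rw [h1, Nat.card_eq_one_iff_exists]
  constructor
  · rintro ⟨⟨x, hx⟩, hu⟩
    exact ⟨x, hx, fun y hy => by simpa using congrArg Subtype.val (hu ⟨y, hy⟩)⟩
  · rintro ⟨x, hx, hu⟩
    exact ⟨⟨x, hx⟩, fun y => Subtype.ext (hu y.1 y.2)⟩
end

section
/- Let G = S₃ be the symmetric group on 3 letters, let k = 𝔽₂, and let V = {(x₁, x₂, x₃) ∈ 𝔽₂³ : x₁ + x₂ + x₃ = 0} with G acting by permuting coordinates (the two-dimensional irreducible 𝔽₂S₃-module). Then End_{𝔽₂}(V), with G acting by (g·f)(v) = g·f(g⁻¹·v), is isomorphic as an 𝔽₂S₃-module to V ⊕ 𝔽₂[G/C], where C = A₃ is the index-two (cyclic of order 3) subgroup of G and 𝔽₂[G/C] is the permutation module on the two cosets of C. -/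
/-- The linear map `(x₁,x₂,x₃) ↦ x₁+x₂+x₃` on `𝔽₂³`. -/
noncomputable def coordSum : (Fin 3 → ZMod 2) →ₗ[ZMod 2] ZMod 2 :=
  ∑ i : Fin 3, LinearMap.proj i

/-- The two-dimensional irreducible `𝔽₂S₃`-module
`V = {(x₁,x₂,x₃) ∈ 𝔽₂³ : x₁+x₂+x₃ = 0}`. -/
noncomputable def V3 : Submodule (ZMod 2) (Fin 3 → ZMod 2) := LinearMap.ker coordSum

/-- Permutation of coordinates as a linear map on `𝔽₂³`. -/
def permCoords (g : Equiv.Perm (Fin 3)) : (Fin 3 → ZMod 2) →ₗ[ZMod 2] (Fin 3 → ZMod 2) where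
  toFun v := fun i => v (g⁻¹ i)
  map_add' _ _ := rfl
  map_smul' _ _ := rfl

lemma permCoords_mem (g : Equiv.Perm (Fin 3)) {v : Fin 3 → ZMod 2} (hv : v ∈ V3) :
    permCoords g v ∈ V3 := by
  simp only [V3, LinearMap.mem_ker, coordSum, LinearMap.sum_apply, LinearMap.proj_apply] at hv ⊢
  first
  | exact (Equiv.sum_comp g⁻¹ v).trans hv
  | simpa [permCoords] using (Equiv.sum_comp g⁻¹ v).trans hv

/-- The representation of `S₃` on `V` by permutation of coordinates. -/
noncomputable def rho3 : Representation (ZMod 2) (Equiv.Perm (Fin 3)) ↥V3 where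
  toFun g := (permCoords g).restrict (fun v hv => permCoords_mem g hv)
  map_one' := by
    ext v
    simp [permCoords, LinearMap.restrict_apply]
  map_mul' g h := by
    ext v
    simp [permCoords, LinearMap.restrict_apply, mul_inv_rev]

lemma mem_V3_iff (v : Fin 3 → ZMod 2) : v ∈ V3 ↔ v 0 + v 1 + v 2 = 0 := by
  simp [V3, coordSum, LinearMap.mem_ker, LinearMap.sum_apply, Fin.sum_univ_three]

def wB : Fin 2 → ↥V3 := ![⟨![1,0,1], (mem_V3_iff _).2 (by decide)⟩, ⟨![0,1,1], (mem_V3_iff _).2 (by decide)⟩]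
def uT : ↥V3 := ⟨![1,1,0], (mem_V3_iff _).2 (by decide)⟩
noncomputable def uu : Fin 3 → ↥V3 := ![wB 1, wB 0, uT]

lemma coe_V3 (z : ↥V3) : (z : Fin 3 → ZMod 2) 2 = (z : Fin 3 → ZMod 2) 0 + (z : Fin 3 → ZMod 2) 1 := by
  have h := (mem_V3_iff z.1).1 z.2
  revert h
  generalize (z : Fin 3 → ZMod 2) 0 = a
  generalize (z : Fin 3 → ZMod 2) 1 = b
  generalize (z : Fin 3 → ZMod 2) 2 = c
  revert a b c; decide

lemma span2 (z : ↥V3) : (z : Fin 3 → ZMod 2) 0 • wB 0 + (z : Fin 3 → ZMod 2) 1 • wB 1 = z := by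
  have h := coe_V3 z
  apply Subtype.ext; funext i
  fin_cases i <;>
    simp [wB, Matrix.cons_val_zero, Matrix.cons_val_one] <;>
    simp_all

lemma rho3_coe (g : Equiv.Perm (Fin 3)) (z : ↥V3) (i : Fin 3) :
    ((rho3 g z : ↥V3) : Fin 3 → ZMod 2) i = (z : Fin 3 → ZMod 2) (g⁻¹ i) := rfl

noncomputable def NN (i : Fin 3) : ↥V3 →ₗ[ZMod 2] ↥V3 where
  toFun z := (z : Fin 3 → ZMod 2) i • uu i
  map_add' z z' := by simp [add_smul]
  map_smul' r z := by simp [mul_smul]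

noncomputable def CC : ↥V3 →ₗ[ZMod 2] ↥V3 := rho3 (finRotate 3)

lemma NN_coe (i : Fin 3) (z : ↥V3) (j : Fin 3) :
    ((NN i z : ↥V3) : Fin 3 → ZMod 2) j = (z : Fin 3 → ZMod 2) i * (uu i : Fin 3 → ZMod 2) j := rfl

abbrev Q3 := Equiv.Perm (Fin 3) ⧸ alternatingGroup (Fin 3)
noncomputable def mM (φ : ↥V3 →ₗ[ZMod 2] ↥V3) (i : Fin 3) (j : Fin 2) : ZMod 2 := (φ (wB j) : Fin 3 → ZMod 2) i

def sgn (g : Equiv.Perm (Fin 3)) : ZMod 2 := if Equiv.Perm.sign g = 1 then 0 else 1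
def chi : Q3 → ZMod 2 :=
  Quotient.lift sgn (by
    intro a b h
    replace h : a⁻¹ * b ∈ alternatingGroup (Fin 3) := QuotientGroup.leftRel_apply.mp h
    rw [Equiv.Perm.mem_alternatingGroup] at h
    revert h; revert a b; decide)
lemma chi_mk (g : Equiv.Perm (Fin 3)) : chi (QuotientGroup.mk g) = sgn g := rfl
lemma chi_smul (g : Equiv.Perm (Fin 3)) (t : Q3) : chi (g⁻¹ • t) = sgn g + chi t := by
  induction t using QuotientGroup.induction_on with | H p =>
  have h : g⁻¹ • (QuotientGroup.mk p : Q3) = QuotientGroup.mk (g⁻¹ * p) := rfl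
  rw [h, chi_mk, chi_mk]
  clear h; revert g p; decide

noncomputable def toE : (↥V3 →ₗ[ZMod 2] ↥V3) →ₗ[ZMod 2] (↥V3 × (Q3 → ZMod 2)) where
  toFun φ := ((mM φ 0 0 + mM φ 0 1 + mM φ 1 1) • wB 0 + (mM φ 0 0 + mM φ 1 0 + mM φ 1 1) • wB 1,
      fun t => (mM φ 0 1 + mM φ 1 0 + mM φ 1 1) + (mM φ 0 0 + mM φ 1 1) * chi t)
  map_add' φ ψ := by
    have hm : ∀ i j, mM (φ + ψ) i j = mM φ i j + mM ψ i j := by intro i j; simp [mM]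
    refine Prod.ext ?_ ?_
    · simp only [hm, Prod.fst_add]; module
    · funext t; simp only [hm, Prod.snd_add, Pi.add_apply]; ring
  map_smul' r φ := by
    have hm : ∀ i j, mM (r • φ) i j = r * mM φ i j := by intro i j; simp [mM]
    refine Prod.ext ?_ ?_
    · simp only [hm, RingHom.id_apply, Prod.smul_fst]; module
    · funext t; simp only [hm, RingHom.id_apply, Prod.smul_snd, Pi.smul_apply, smul_eq_mul]; ring

noncomputable def q1 : Q3 := QuotientGroup.mk 1
noncomputable def qt : Q3 := QuotientGroup.mk (Equiv.swap 0 1)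

noncomputable def La : (↥V3 × (Q3 → ZMod 2)) →ₗ[ZMod 2] ZMod 2 :=
  (LinearMap.proj q1).comp (LinearMap.snd (ZMod 2) ↥V3 (Q3 → ZMod 2))
noncomputable def Lt : (↥V3 × (Q3 → ZMod 2)) →ₗ[ZMod 2] ZMod 2 :=
  (LinearMap.proj qt).comp (LinearMap.snd (ZMod 2) ↥V3 (Q3 → ZMod 2))
noncomputable def Lx : (↥V3 × (Q3 → ZMod 2)) →ₗ[ZMod 2] ZMod 2 :=
  (LinearMap.proj (0 : Fin 3)).comp (V3.subtype.comp (LinearMap.fst (ZMod 2) ↥V3 (Q3 → ZMod 2)))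
noncomputable def Ly : (↥V3 × (Q3 → ZMod 2)) →ₗ[ZMod 2] ZMod 2 :=
  (LinearMap.proj (1 : Fin 3)).comp (V3.subtype.comp (LinearMap.fst (ZMod 2) ↥V3 (Q3 → ZMod 2)))

noncomputable def invE : (↥V3 × (Q3 → ZMod 2)) →ₗ[ZMod 2] (↥V3 →ₗ[ZMod 2] ↥V3) :=
  La.smulRight LinearMap.id + (La + Lt).smulRight CC + Lx.smulRight (NN 0)
    + Ly.smulRight (NN 1) + (Lx + Ly).smulRight (NN 2)

lemma invE_coe (v : ↥V3) (f : Q3 → ZMod 2) (z : ↥V3) (i : Fin 3) :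
    ((invE (v, f) z : ↥V3) : Fin 3 → ZMod 2) i =
      f q1 * (z : Fin 3 → ZMod 2) i
      + (f q1 + f qt) * (z : Fin 3 → ZMod 2) ((finRotate 3)⁻¹ i)
      + (v : Fin 3 → ZMod 2) 0 * ((z : Fin 3 → ZMod 2) 0 * (uu 0 : Fin 3 → ZMod 2) i)
      + (v : Fin 3 → ZMod 2) 1 * ((z : Fin 3 → ZMod 2) 1 * (uu 1 : Fin 3 → ZMod 2) i)
      + ((v : Fin 3 → ZMod 2) 0 + (v : Fin 3 → ZMod 2) 1)
          * ((z : Fin 3 → ZMod 2) 2 * (uu 2 : Fin 3 → ZMod 2) i) := by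
  simp [invE, La, Lt, Lx, Ly, NN_coe, CC, rho3_coe, mul_add, add_mul, mul_comm, mul_assoc, mul_left_comm]

lemma chi_q1 : chi q1 = 0 := by rw [q1, chi_mk]; decide
lemma chi_qt : chi qt = 1 := by rw [qt, chi_mk]; decide

lemma toE_fst_coe (φ : ↥V3 →ₗ[ZMod 2] ↥V3) (i : Fin 3) :
    (((toE φ).1 : ↥V3) : Fin 3 → ZMod 2) i
      = (mM φ 0 0 + mM φ 0 1 + mM φ 1 1) * (wB 0 : Fin 3 → ZMod 2) i
        + (mM φ 0 0 + mM φ 1 0 + mM φ 1 1) * (wB 1 : Fin 3 → ZMod 2) i := by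
  simp [toE]

lemma toE_snd (φ : ↥V3 →ₗ[ZMod 2] ↥V3) (t : Q3) :
    (toE φ).2 t = (mM φ 0 1 + mM φ 1 0 + mM φ 1 1) + (mM φ 0 0 + mM φ 1 1) * chi t := by
  simp [toE]

lemma hh1 : toE.comp invE = LinearMap.id := by
  apply LinearMap.ext; intro p
  obtain ⟨v, f⟩ := p
  rw [LinearMap.comp_apply, LinearMap.id_apply]
  refine Prod.ext ?_ ?_
  · rw [← span2 v]
    apply Subtype.ext; funext i
    simp only [toE_fst_coe, mM, invE_coe, Submodule.coe_add, Submodule.coe_smul, Pi.add_apply,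
      Pi.smul_apply, smul_eq_mul]
    generalize f q1 = a
    generalize f qt = b
    generalize (v : Fin 3 → ZMod 2) 0 = x
    generalize (v : Fin 3 → ZMod 2) 1 = y
    revert a b x y i; decide
  · funext t
    induction t using QuotientGroup.induction_on with | H p =>
    simp only [toE_snd, mM, invE_coe, chi_mk]
    by_cases hp : Equiv.Perm.sign p = 1
    · have h1 : (QuotientGroup.mk p : Q3) = q1 := by
        rw [q1]; apply QuotientGroup.eq.mpr
        rw [Equiv.Perm.mem_alternatingGroup]; revert hp; revert p; decide
      have h2 : sgn p = 0 := by simp [sgn, hp]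
      rw [h2, h1]
      generalize f q1 = a
      generalize f qt = b
      generalize (v : Fin 3 → ZMod 2) 0 = x
      generalize (v : Fin 3 → ZMod 2) 1 = y
      revert a b x y; decide
    · replace hp : Equiv.Perm.sign p = -1 := by
        rcases Int.units_eq_one_or (Equiv.Perm.sign p) with h | h
        · exact absurd h hp
        · exact h
      have h1 : (QuotientGroup.mk p : Q3) = qt := by
        rw [qt]; apply QuotientGroup.eq.mpr
        rw [Equiv.Perm.mem_alternatingGroup]; revert hp; revert p; decide
      have h2 : sgn p = 1 := by
        simp only [sgn, hp]; decide
      rw [h2, h1]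
      generalize f q1 = a
      generalize f qt = b
      generalize (v : Fin 3 → ZMod 2) 0 = x
      generalize (v : Fin 3 → ZMod 2) 1 = y
      revert a b x y; decide

lemma hh2 : invE.comp toE = LinearMap.id := by
  apply LinearMap.ext; intro φ
  rw [LinearMap.comp_apply, LinearMap.id_apply]
  apply LinearMap.ext; intro z
  have hz : φ z = (z : Fin 3 → ZMod 2) 0 • φ (wB 0) + (z : Fin 3 → ZMod 2) 1 • φ (wB 1) := by
    conv_lhs => rw [← span2 z]
    rw [map_add, map_smul, map_smul]
  rw [hz]
  apply Subtype.ext; funext i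
  rw [invE_coe]
  simp only [toE_fst_coe, toE_snd, chi_q1, chi_qt, mM, Submodule.coe_add, Submodule.coe_smul,
    Pi.add_apply, Pi.smul_apply, smul_eq_mul]
  have hp := coe_V3 (φ (wB 0))
  have hq := coe_V3 (φ (wB 1))
  have hzc := coe_V3 z
  generalize hP : ((φ (wB 0) : ↥V3) : Fin 3 → ZMod 2) = p at hp ⊢
  generalize hQ : ((φ (wB 1) : ↥V3) : Fin 3 → ZMod 2) = q at hq ⊢
  generalize hZ : ((z : ↥V3) : Fin 3 → ZMod 2) = zz at hzc ⊢
  clear hP hQ hZ hz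
  revert hp hq hzc
  revert i
  revert p q zz
  decide

lemma mM_conj (g : Equiv.Perm (Fin 3)) (φ : ↥V3 →ₗ[ZMod 2] ↥V3) (i : Fin 3) (j : Fin 2) :
    mM (Representation.linHom rho3 rho3 g φ) i j =
      (wB j : Fin 3 → ZMod 2) (g 0) * ((φ (wB 0) : ↥V3) : Fin 3 → ZMod 2) (g⁻¹ i)
        + (wB j : Fin 3 → ZMod 2) (g 1) * ((φ (wB 1) : ↥V3) : Fin 3 → ZMod 2) (g⁻¹ i) := by
  rw [mM, Representation.linHom_apply, LinearMap.comp_apply, LinearMap.comp_apply, rho3_coe]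
  have h : rho3 g⁻¹ (wB j) = ((wB j : Fin 3 → ZMod 2) (g 0)) • wB 0
      + ((wB j : Fin 3 → ZMod 2) (g 1)) • wB 1 := by
    conv_lhs => rw [← span2 (rho3 g⁻¹ (wB j))]
    simp only [rho3_coe, inv_inv]
  rw [h]
  simp only [map_add, map_smul, Submodule.coe_add, Submodule.coe_smul, Pi.add_apply,
    Pi.smul_apply, smul_eq_mul]

/-- As an `𝔽₂S₃`-module, `End_{𝔽₂}(V)` (with the conjugation action) is
isomorphic to `V ⊕ 𝔽₂[G/C]`, where `C = A₃` and `𝔽₂[G/C]` is the permutation module on the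
two cosets of `C` in `G = S₃`. -/
theorem endo_V3_iso_V3_prod_permutation :
    ∃ e : (↥V3 →ₗ[ZMod 2] ↥V3) ≃ₗ[ZMod 2]
        (↥V3 × ((Equiv.Perm (Fin 3) ⧸ alternatingGroup (Fin 3)) → ZMod 2)),
      ∀ (g : Equiv.Perm (Fin 3)) (φ : ↥V3 →ₗ[ZMod 2] ↥V3),
        e (Representation.linHom rho3 rho3 g φ) =
          (rho3 g (e φ).1, fun x => (e φ).2 (g⁻¹ • x)) := by
  refine ⟨LinearEquiv.ofLinear toE invE hh1 hh2, ?_⟩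
  intro g φ
  rw [LinearEquiv.ofLinear_apply, LinearEquiv.ofLinear_apply]
  refine Prod.ext ?_ ?_
  · apply Subtype.ext; funext i
    rw [rho3_coe]
    simp only [toE_fst_coe, mM_conj]
    simp only [mM]
    have hp := coe_V3 (φ (wB 0))
    have hq := coe_V3 (φ (wB 1))
    generalize hP : ((φ (wB 0) : ↥V3) : Fin 3 → ZMod 2) = p at hp ⊢
    generalize hQ : ((φ (wB 1) : ↥V3) : Fin 3 → ZMod 2) = q at hq ⊢
    clear hP hQ
    revert hp hq
    revert i
    revert p q
    revert g
    decide
  · funext t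
    show (toE (Representation.linHom rho3 rho3 g φ)).2 t = (toE φ).2 (g⁻¹ • t)
    rw [toE_snd, toE_snd, chi_smul]
    simp only [mM_conj]
    simp only [mM]
    have hp := coe_V3 (φ (wB 0))
    have hq := coe_V3 (φ (wB 1))
    generalize hP : ((φ (wB 0) : ↥V3) : Fin 3 → ZMod 2) = p at hp ⊢
    generalize hQ : ((φ (wB 1) : ↥V3) : Fin 3 → ZMod 2) = q at hq ⊢
    generalize chi t = s
    clear hP hQ
    revert hp hq
    revert s
    revert p q
    revert g
    decide
end
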